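/- arXiv:2602.15443 — 4 statements merged into one kernel-verified Lean document; each statement's English description precedes it below -/
import Mathlib

section
/- Let g : ℝ_max^n → ℝ_max satisfy g(ε) = ε, and suppose the row vector a = (a_1,…,a_n) ∈ ℝ_max^{1×n} gives a tropical linear approximation of g at ε. Then for each i ∈ {1,…,n}, letting x(i,t) ∈ ℝ_max^n denote the vector whose i-th entry is t ∈ ℝ and whose other entries are -∞, one has E(g(x(i,t)))/e^t → E(a_i) as t → -∞ (equivalently, a_i = lim_{x_i → -∞} g(x(i)) − x_i in the sense that if a_i ∈ ℝ the difference tends to a_i and if a_i = -∞ it tends to -∞). -/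
open Filter Topology

/-- `E(t) = e^t` for real `t`, and `E(-∞) = 0`. -/
noncomputable def E : WithBot ℝ → ℝ :=
  WithBot.recBotCoe 0 Real.exp

/-- The magnitude `‖x‖ = max_i E(x_i) = e^{max_i x_i}` of a tropical vector. -/
noncomputable def tnorm {n : ℕ} (x : Fin n → WithBot ℝ) : ℝ :=
  E (Finset.univ.sup x)

/-- Tropical product of a row vector and a column vector: `a ⊗ x = max_j (a_j + x_j)`. -/
noncomputable def tdot {n : ℕ} (a x : Fin n → WithBot ℝ) : WithBot ℝ :=
  Finset.univ.sup fun j => a j + x j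

/-- The tropical zero vector `ε = (-∞, …, -∞)ᵀ`. -/
def botVec (n : ℕ) : Fin n → WithBot ℝ := fun _ => ⊥

/-- The row vector `a` gives a tropical linear approximation of `g` at `ε`:
`d(g(x), a ⊗ x) / ‖x‖ → 0` as `x → ε`. -/
def IsTropLinApprox {n : ℕ} (g : (Fin n → WithBot ℝ) → WithBot ℝ)
    (a : Fin n → WithBot ℝ) : Prop :=
  ∀ η : ℝ, 0 < η → ∃ δ : ℝ, 0 < δ ∧ ∀ x : Fin n → WithBot ℝ,
    0 < tnorm x → tnorm x < δ → |E (g x) - E (tdot a x)| ≤ η * tnorm x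

/-- `lam` is a (tropical) eigenvalue of `A`. -/
def IsEigenvalue {n : ℕ} (A : Fin n → Fin n → WithBot ℝ) (lam : WithBot ℝ) : Prop :=
  ∃ x : Fin n → WithBot ℝ, x ≠ botVec n ∧ ∀ i, tdot (A i) x = lam + x i

/-- A circuit (closed walk) of length `ℓ ≥ 1` in the weighted digraph `G(A)`. -/
def IsCircuit {n : ℕ} (A : Fin n → Fin n → WithBot ℝ) (ℓ : ℕ) (c : ℕ → Fin n) : Prop :=
  1 ≤ ℓ ∧ c ℓ = c 0 ∧ ∀ k < ℓ, A (c k) (c (k + 1)) ≠ ⊥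

/-- The weight of a circuit: the sum of its edge weights. -/
noncomputable def circuitWeight {n : ℕ} (A : Fin n → Fin n → WithBot ℝ)
    (ℓ : ℕ) (c : ℕ → Fin n) : WithBot ℝ :=
  ∑ k ∈ Finset.range ℓ, A (c k) (c (k + 1))

/-- Tropical matrix product. -/
noncomputable def tmul {n : ℕ} (A B : Fin n → Fin n → WithBot ℝ) :
    Fin n → Fin n → WithBot ℝ :=
  fun i j => Finset.univ.sup fun k => A i k + B k j

/-- Tropical matrix power; `A^{⊗0}` is the tropical identity matrix. -/
noncomputable def tpow {n : ℕ} (A : Fin n → Fin n → WithBot ℝ) :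
    ℕ → Fin n → Fin n → WithBot ℝ
  | 0 => fun i j => if i = j then (0 : WithBot ℝ) else ⊥
  | k + 1 => tmul (tpow A k) A

/-- `G(A)` is strongly connected (i.e. `A` is irreducible). -/
def StronglyConnected {n : ℕ} (A : Fin n → Fin n → WithBot ℝ) : Prop :=
  ∀ i j : Fin n, ∃ (ℓ : ℕ) (c : ℕ → Fin n),
    c 0 = i ∧ c ℓ = j ∧ ∀ k < ℓ, A (c k) (c (k + 1)) ≠ ⊥

/-- Stability of the fixed point `ε` of `x ↦ f(x)`. -/
def TropStable {n : ℕ} (f : (Fin n → WithBot ℝ) → (Fin n → WithBot ℝ)) : Prop :=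
  ∀ α : ℝ, 0 < α → ∃ δ : ℝ, 0 < δ ∧
    ∀ x0 : Fin n → WithBot ℝ, tnorm x0 < δ → ∀ t : ℕ, tnorm (f^[t] x0) < α

/-- Asymptotic stability of the fixed point `ε` of `x ↦ f(x)`. -/
def TropAsymptoticallyStable {n : ℕ}
    (f : (Fin n → WithBot ℝ) → (Fin n → WithBot ℝ)) : Prop :=
  TropStable f ∧ ∃ δ' : ℝ, 0 < δ' ∧ ∀ x0 : Fin n → WithBot ℝ, tnorm x0 < δ' →
    Filter.Tendsto (fun t : ℕ => tnorm (f^[t] x0)) Filter.atTop (nhds 0)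

/-- `x(i,t)`: the vector whose `i`-th entry is `t ∈ ℝ` and whose other entries are `-∞`. -/
noncomputable def unitVec {n : ℕ} (i : Fin n) (t : ℝ) : Fin n → WithBot ℝ :=
  fun j => if j = i then (t : WithBot ℝ) else ⊥


lemma sup_unitVec {n : ℕ} (i : Fin n) (t : ℝ) :
    Finset.univ.sup (unitVec i t) = (t : WithBot ℝ) := by
  apply le_antisymm
  · apply Finset.sup_le
    intro j _
    unfold unitVec
    split <;> simp
  · have := Finset.le_sup (f := unitVec i t) (Finset.mem_univ i)
    simpa [unitVec] using this

lemma tnorm_unitVec {n : ℕ} (i : Fin n) (t : ℝ) :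
    tnorm (unitVec i t) = Real.exp t := by
  rw [tnorm, sup_unitVec]; rfl

lemma tdot_unitVec {n : ℕ} (a : Fin n → WithBot ℝ) (i : Fin n) (t : ℝ) :
    tdot a (unitVec i t) = a i + t := by
  unfold tdot
  apply le_antisymm
  · apply Finset.sup_le
    intro j _
    unfold unitVec
    by_cases h : j = i
    · subst h; simp
    · simp [h]
  · have := Finset.le_sup (f := fun j => a j + unitVec i t j) (Finset.mem_univ i)
    simpa [unitVec] using this

lemma E_add_coe (b : WithBot ℝ) (t : ℝ) : E (b + t) = E b * Real.exp t := by
  induction b using WithBot.recBotCoe with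
  | bot => simp [E]
  | coe r =>
    have h : (r : WithBot ℝ) + (t : WithBot ℝ) = ((r + t : ℝ) : WithBot ℝ) := by
      norm_cast
    rw [h]
    show Real.exp (r + t) = Real.exp r * Real.exp t
    exact Real.exp_add r t

/-- if `a` gives a tropical linear approximation of `g` at `ε`, then for each `i`,
`E(g(x(i,t)))/e^t → E(a_i)` as `t → -∞`. -/
theorem stmt_0 {n : ℕ} (g : (Fin n → WithBot ℝ) → WithBot ℝ)
    (hg : g (botVec n) = ⊥) (a : Fin n → WithBot ℝ)
    (ha : IsTropLinApprox g a) (i : Fin n) :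
    Filter.Tendsto (fun t : ℝ => E (g (unitVec i t)) / Real.exp t)
      Filter.atBot (nhds (E (a i))) := by
  rw [Metric.tendsto_nhds]
  intro η hη
  obtain ⟨δ, hδ, hδ'⟩ := ha (η/2) (by linarith)
  filter_upwards [eventually_lt_atBot (Real.log δ)] with t ht
  have hexp : Real.exp t < δ := by
    calc Real.exp t < Real.exp (Real.log δ) := Real.exp_lt_exp.mpr ht
    _ = δ := Real.exp_log hδ
  have h1 : 0 < tnorm (unitVec i t) := by rw [tnorm_unitVec]; exact Real.exp_pos t
  have h2 : tnorm (unitVec i t) < δ := by rwa [tnorm_unitVec]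
  have key := hδ' (unitVec i t) h1 h2
  rw [tnorm_unitVec, tdot_unitVec, E_add_coe, mul_comm (E (a i))] at key
  rw [Real.dist_eq]
  have hep := Real.exp_pos t
  have : |E (g (unitVec i t)) / Real.exp t - E (a i)| ≤ η / 2 := by
    rw [div_sub' (ne_of_gt hep), abs_div, abs_of_pos hep,
      div_le_iff₀ hep]
    linarith [key]
  linarith
end

section
/- Let f : ℝ_max^n → ℝ_max^n satisfy f(ε) = ε, and suppose f is tropical-linearly approximated at ε with tropical Jacobian matrix J ∈ ℝ_max^{n×n}. If the maximum eigenvalue of J is negative — that is, every λ ∈ ℝ that is an eigenvalue of J satisfies λ < 0 — then the fixed point ε of the difference equation x^{(t+1)} = f(x^{(t)}) is asymptotically stable. -/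
open Filter Topology

section Helpers

open Finset

lemma sup_add_left' {ι : Type*} (s : Finset ι) (a : WithBot ℝ) (g : ι → WithBot ℝ) :
    (s.sup fun j => a + g j) = a + s.sup g := by
  rcases s.eq_empty_or_nonempty with h | h
  · simp [h]
  · apply le_antisymm
    · exact Finset.sup_le fun j hj => add_le_add_right (Finset.le_sup hj) a
    · obtain ⟨j, hj, hje⟩ := s.exists_mem_eq_sup h g
      rw [hje]
      exact Finset.le_sup (f := fun j => a + g j) hj

lemma sup_add_right' {ι : Type*} (s : Finset ι) (a : WithBot ℝ) (g : ι → WithBot ℝ) :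
    (s.sup fun j => g j + a) = s.sup g + a := by
  simp only [add_comm _ a]
  exact sup_add_left' s a g

lemma tmul_assoc {n : ℕ} (A B C : Fin n → Fin n → WithBot ℝ) :
    tmul (tmul A B) C = tmul A (tmul B C) := by
  funext i j
  show (univ.sup fun k => (univ.sup fun m => A i m + B m k) + C k j)
      = univ.sup fun m => A i m + univ.sup fun k => B m k + C k j
  calc (univ.sup fun k => (univ.sup fun m => A i m + B m k) + C k j)
      = univ.sup fun k => univ.sup fun m => (A i m + B m k) + C k j := by
        refine Finset.sup_congr rfl fun k _ => ?_
        rw [← sup_add_right']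
    _ = univ.sup fun m => univ.sup fun k => (A i m + B m k) + C k j := Finset.sup_comm _ _ _
    _ = univ.sup fun m => A i m + univ.sup fun k => B m k + C k j := by
        refine Finset.sup_congr rfl fun m _ => ?_
        rw [← sup_add_left']
        simp only [add_assoc]

lemma tmul_tpow_zero {n : ℕ} (A : Fin n → Fin n → WithBot ℝ) :
    tmul A (tpow A 0) = A := by
  funext i j
  show (univ.sup fun k => A i k + if k = j then (0:WithBot ℝ) else ⊥) = A i j
  apply le_antisymm
  · refine Finset.sup_le fun k _ => ?_
    by_cases h : k = j
    · simp [h]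
    · simp [h]
  · have := Finset.le_sup (f := fun k => A i k + if k = j then (0:WithBot ℝ) else ⊥)
      (Finset.mem_univ j)
    simpa using this

lemma tpow_zero_tmul {n : ℕ} (A : Fin n → Fin n → WithBot ℝ) :
    tmul (tpow A 0) A = A := by
  funext i j
  show (univ.sup fun k => (if i = k then (0:WithBot ℝ) else ⊥) + A k j) = A i j
  apply le_antisymm
  · refine Finset.sup_le fun k _ => ?_
    by_cases h : i = k
    · simp [h]
    · simp [h]
  · have := Finset.le_sup (f := fun k => (if i = k then (0:WithBot ℝ) else ⊥) + A k j)
      (Finset.mem_univ i)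
    simpa using this

lemma tpow_succ_left {n : ℕ} (A : Fin n → Fin n → WithBot ℝ) (ℓ : ℕ) :
    tpow A (ℓ + 1) = tmul A (tpow A ℓ) := by
  induction ℓ with
  | zero => show tmul (tpow A 0) A = tmul A (tpow A 0); rw [tmul_tpow_zero, tpow_zero_tmul]
  | succ ℓ ih =>
      show tmul (tpow A (ℓ+1)) A = tmul A (tpow A (ℓ+1))
      conv_lhs => rw [ih]
      rw [tmul_assoc]
      rfl

lemma walk_le_tpow {n : ℕ} (A : Fin n → Fin n → WithBot ℝ) :
    ∀ (ℓ : ℕ) (c : ℕ → Fin n), circuitWeight A ℓ c ≤ tpow A ℓ (c 0) (c ℓ) := by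
  intro ℓ
  induction ℓ with
  | zero => intro c; simp [circuitWeight, tpow]
  | succ ℓ ih =>
      intro c
      have h1 : circuitWeight A (ℓ+1) c = circuitWeight A ℓ c + A (c ℓ) (c (ℓ+1)) :=
        Finset.sum_range_succ _ _
      rw [h1]
      calc circuitWeight A ℓ c + A (c ℓ) (c (ℓ+1))
          ≤ tpow A ℓ (c 0) (c ℓ) + A (c ℓ) (c (ℓ+1)) := add_le_add_left (ih c) _
        _ ≤ tpow A (ℓ+1) (c 0) (c (ℓ+1)) :=
            Finset.le_sup (f := fun k => tpow A ℓ (c 0) k + A k (c (ℓ+1))) (Finset.mem_univ (c ℓ))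

lemma tpow_attained {n : ℕ} (A : Fin n → Fin n → WithBot ℝ) :
    ∀ (ℓ : ℕ) (i j : Fin n), tpow A ℓ i j ≠ ⊥ →
      ∃ c : ℕ → Fin n, c 0 = i ∧ c ℓ = j ∧ (∀ k < ℓ, A (c k) (c (k+1)) ≠ ⊥) ∧
        circuitWeight A ℓ c = tpow A ℓ i j := by
  intro ℓ
  induction ℓ with
  | zero =>
      intro i j h
      by_cases hij : i = j
      · exact ⟨fun _ => i, rfl, by simp [hij], by omega, by simp [circuitWeight, tpow, hij]⟩
      · exact absurd (by simp [tpow, hij]) h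
  | succ ℓ ih =>
      intro i j h
      have hne : (Finset.univ : Finset (Fin n)).Nonempty := by
        by_contra hc
        rw [Finset.not_nonempty_iff_eq_empty] at hc
        exact h (by simp [tpow, tmul, hc])
      obtain ⟨k0, _, hk0⟩ := Finset.exists_mem_eq_sup Finset.univ hne
        (fun k => tpow A ℓ i k + A k j)
      have hsup : tpow A (ℓ+1) i j = tpow A ℓ i k0 + A k0 j := hk0
      rw [hsup] at h
      have h1 : tpow A ℓ i k0 ≠ ⊥ := fun hb => h (by simp [hb])
      have h2 : A k0 j ≠ ⊥ := fun hb => h (by simp [hb])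
      obtain ⟨c, hc0, hcl, hcv, hcw⟩ := ih i k0 h1
      refine ⟨fun m => if m ≤ ℓ then c m else j, by simpa using hc0, by simp, ?_, ?_⟩
      · intro k hk
        show A (if k ≤ ℓ then c k else j) (if k+1 ≤ ℓ then c (k+1) else j) ≠ ⊥
        rcases Nat.lt_succ_iff_lt_or_eq.mp hk with hk' | hk'
        · rw [if_pos (by omega : k ≤ ℓ), if_pos (by omega : k+1 ≤ ℓ)]
          exact hcv k hk'
        · subst hk'
          rw [if_pos le_rfl, if_neg (by omega), hcl]
          exact h2
      · have hsum : circuitWeight A (ℓ+1) (fun m => if m ≤ ℓ then c m else j)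
            = circuitWeight A ℓ (fun m => if m ≤ ℓ then c m else j)
              + A (if ℓ ≤ ℓ then c ℓ else j) (if ℓ+1 ≤ ℓ then c (ℓ+1) else j) :=
          Finset.sum_range_succ _ _
        rw [hsum, if_pos le_rfl, if_neg (by omega), hcl]
        have : circuitWeight A ℓ (fun m => if m ≤ ℓ then c m else j) = circuitWeight A ℓ c := by
          refine Finset.sum_congr rfl fun k hk => ?_
          rw [Finset.mem_range] at hk
          show A (if k ≤ ℓ then c k else j) (if k+1 ≤ ℓ then c (k+1) else j) = A (c k) (c (k+1))
          rw [if_pos (by omega : k ≤ ℓ), if_pos (by omega : k+1 ≤ ℓ)]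
        rw [this, hcw, hsup]

end Helpers

section Helpers2
open Finset

lemma exists_repeat {n : ℕ} (c : ℕ → Fin n) : ∃ p q, p < q ∧ q ≤ n ∧ c p = c q := by
  have hcard : Fintype.card (Fin n) < Fintype.card (Fin (n+1)) := by simp
  obtain ⟨a, b, hab, he⟩ := Fintype.exists_ne_map_eq_of_card_lt
    (fun k : Fin (n+1) => c k) hcard
  rcases lt_or_gt_of_ne hab with h | h
  · exact ⟨a, b, h, Nat.lt_succ_iff.mp b.isLt, he⟩
  · exact ⟨b, a, h, Nat.lt_succ_iff.mp a.isLt, he.symm⟩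

lemma surgery {n : ℕ} (A : Fin n → Fin n → WithBot ℝ) (L : ℕ) (c : ℕ → Fin n)
    (hvalid : ∀ k < L, A (c k) (c (k+1)) ≠ ⊥)
    (p q : ℕ) (hpq : p < q) (hqL : q ≤ L) (hc : c p = c q) :
    ∃ c₂ : ℕ → Fin n,
      c₂ 0 = c 0 ∧ c₂ (L - (q-p)) = c L ∧
      (∀ k < L - (q-p), A (c₂ k) (c₂ (k+1)) ≠ ⊥) ∧
      IsCircuit A (q-p) (fun k => c (p + k)) ∧
      circuitWeight A L c =
        circuitWeight A (L-(q-p)) c₂ + circuitWeight A (q-p) (fun k => c (p+k)) := by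
  set m := q - p with hm
  set c₂ : ℕ → Fin n := fun k => if k ≤ p then c k else c (k + m) with hc₂
  have hedge : ∀ k, A (c₂ k) (c₂ (k+1))
      = if k < p then A (c k) (c (k+1)) else A (c (k+m)) (c (k+m+1)) := by
    intro k
    show A (if k ≤ p then c k else c (k+m)) (if k+1 ≤ p then c (k+1) else c (k+1+m)) = _
    by_cases h1 : k < p
    · rw [if_pos h1, if_pos (by omega : k ≤ p), if_pos (by omega : k+1 ≤ p)]
    · rw [if_neg h1, if_neg (by omega : ¬ (k+1 ≤ p))]
      by_cases h2 : k = p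
      · subst h2
        rw [if_pos le_rfl]
        have e1 : c k = c (k + m) := by rw [hc]; congr 1; omega
        have e2 : k + 1 + m = k + m + 1 := by omega
        rw [e1, e2]
      · rw [if_neg (by omega : ¬ (k ≤ p))]
        have e2 : k + 1 + m = k + m + 1 := by omega
        rw [e2]
  refine ⟨c₂, if_pos (Nat.zero_le p), ?_, ?_, ?_, ?_⟩
  · show (if L - m ≤ p then c (L-m) else c (L-m+m)) = c L
    by_cases h : L - m ≤ p
    · rw [if_pos h]
      have h1 : L - m = p := by omega
      have h2 : q = L := by omega
      rw [h1, hc, h2]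
    · rw [if_neg h]
      congr 1
      omega
  · intro k hk
    rw [hedge k]
    by_cases h1 : k < p
    · rw [if_pos h1]; exact hvalid k (by omega)
    · rw [if_neg h1]; exact hvalid (k+m) (by omega)
  · refine ⟨by omega, ?_, ?_⟩
    · show c (p + m) = c (p + 0)
      have h1 : p + m = q := by omega
      have h2 : p + 0 = p := by omega
      rw [h1, h2, hc]
    · intro k hk
      show A (c (p+k)) (c (p+(k+1))) ≠ ⊥
      have : p + (k+1) = p + k + 1 := by omega
      rw [this]
      exact hvalid (p+k) (by omega)
  · have hw2 : circuitWeight A (L-m) c₂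
        = ∑ k ∈ Finset.range (L-m), (if k < p then A (c k) (c (k+1)) else A (c (k+m)) (c (k+m+1))) :=
      Finset.sum_congr rfl fun k _ => hedge k
    have hsplit2 : ∑ k ∈ Finset.range (L-m),
          (if k < p then A (c k) (c (k+1)) else A (c (k+m)) (c (k+m+1)))
        = (∑ k ∈ Finset.Ico 0 p, A (c k) (c (k+1)))
          + ∑ k ∈ Finset.Ico p (L-m), A (c (k+m)) (c (k+m+1)) := by
      rw [Finset.range_eq_Ico, ← Finset.sum_Ico_consecutive _ (Nat.zero_le p) (by omega : p ≤ L - m)]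
      congr 1
      · exact Finset.sum_congr rfl fun k hk => if_pos (Finset.mem_Ico.mp hk).2
      · exact Finset.sum_congr rfl fun k hk => if_neg (by
          have := (Finset.mem_Ico.mp hk).1; omega)
    have hshift2 : ∑ k ∈ Finset.Ico p (L-m), A (c (k+m)) (c (k+m+1))
        = ∑ k ∈ Finset.Ico q L, A (c k) (c (k+1)) := by
      have e0 : ∑ k ∈ Finset.Ico p (L-m), A (c (k+m)) (c (k+m+1))
          = ∑ k ∈ Finset.Ico p (L-m), A (c (m+k)) (c (m+k+1)) := by
        refine Finset.sum_congr rfl fun k _ => ?_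
        have e1 : k + m = m + k := by omega
        rw [e1]
      rw [e0, Finset.sum_Ico_add (fun k => A (c k) (c (k+1))) p (L-m) m]
      have hb1 : p + m = q := by omega
      have hb2 : L - m + m = L := by omega
      rw [hb1, hb2]
    have hw1 : circuitWeight A m (fun k => c (p+k))
        = ∑ k ∈ Finset.Ico p q, A (c k) (c (k+1)) := by
      show ∑ k ∈ Finset.range m, A (c (p+k)) (c (p+(k+1))) = _
      have e0 : ∑ k ∈ Finset.range m, A (c (p+k)) (c (p+(k+1)))
          = ∑ k ∈ Finset.Ico 0 m, A (c (p+k)) (c (p+k+1)) := by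
        rw [Finset.range_eq_Ico]
        refine Finset.sum_congr rfl fun k _ => ?_
        have e2 : p + (k+1) = p + k + 1 := by omega
        rw [e2]
      rw [e0, Finset.sum_Ico_add (fun k => A (c k) (c (k+1))) 0 m p]
      have hb1 : 0 + p = p := by omega
      have hb2 : m + p = q := by omega
      rw [hb1, hb2]
    have htot : circuitWeight A L c
        = ((∑ k ∈ Finset.Ico 0 p, A (c k) (c (k+1)))
            + ∑ k ∈ Finset.Ico p q, A (c k) (c (k+1)))
          + ∑ k ∈ Finset.Ico q L, A (c k) (c (k+1)) := by
      show ∑ k ∈ Finset.range L, A (c k) (c (k+1)) = _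
      rw [Finset.range_eq_Ico,
        ← Finset.sum_Ico_consecutive (fun k => A (c k) (c (k+1))) (Nat.zero_le q) hqL,
        ← Finset.sum_Ico_consecutive (fun k => A (c k) (c (k+1))) (Nat.zero_le p) (le_of_lt hpq)]
    rw [htot, hw2, hsplit2, hshift2, hw1]
    abel

end Helpers2
section Helpers3
open Finset

lemma weight_coe {n : ℕ} (A : Fin n → Fin n → WithBot ℝ) (ℓ : ℕ) (c : ℕ → Fin n)
    (h : ∀ k < ℓ, A (c k) (c (k+1)) ≠ ⊥) : ∃ r : ℝ, circuitWeight A ℓ c = (r : WithBot ℝ) := by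
  induction ℓ with
  | zero => exact ⟨0, by simp [circuitWeight]⟩
  | succ ℓ ih =>
      obtain ⟨r, hr⟩ := ih (fun k hk => h k (by omega))
      obtain ⟨s, hs⟩ := WithBot.ne_bot_iff_exists.mp (h ℓ (by omega))
      refine ⟨r + s, ?_⟩
      show circuitWeight A (ℓ+1) c = _
      rw [circuitWeight, Finset.sum_range_succ, ← circuitWeight, hr, ← hs,
        ← WithBot.coe_add]

lemma circuit_weight_le {n : ℕ} (A : Fin n → Fin n → WithBot ℝ) (μ : ℝ)
    (hshort : ∀ ℓ (c : ℕ → Fin n), ℓ ≤ n → IsCircuit A ℓ c →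
      circuitWeight A ℓ c ≤ ((((ℓ : ℝ) * μ) : ℝ) : WithBot ℝ)) :
    ∀ ℓ (c : ℕ → Fin n), IsCircuit A ℓ c →
      circuitWeight A ℓ c ≤ ((((ℓ : ℝ) * μ) : ℝ) : WithBot ℝ) := by
  intro ℓ
  induction ℓ using Nat.strong_induction_on with
  | _ ℓ ih =>
      intro c hcirc
      by_cases hln : ℓ ≤ n
      · exact hshort ℓ c hln hcirc
      · obtain ⟨h1, h2, h3⟩ := hcirc
        obtain ⟨p, q, hpq, hqn, hcpq⟩ := exists_repeat c
        obtain ⟨c₂, hc20, hc2L, hc2v, hc1circ, hweq⟩ :=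
          surgery A ℓ c h3 p q hpq (by omega) hcpq
        set m := q - p with hm
        have hm1 : 1 ≤ m := by omega
        have hmn : m ≤ n := by omega
        have houter : IsCircuit A (ℓ - m) c₂ := by
          refine ⟨by omega, ?_, hc2v⟩
          rw [hc20, hc2L, h2]
        have hw2 : circuitWeight A (ℓ - m) c₂ ≤ ((((ℓ - m : ℕ) : ℝ) * μ : ℝ) : WithBot ℝ) :=
          ih (ℓ - m) (by omega) c₂ houter
        have hw1 : circuitWeight A m (fun k => c (p+k)) ≤ ((((m : ℕ) : ℝ) * μ : ℝ) : WithBot ℝ) :=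
          ih m (by omega) _ hc1circ
        rw [hweq]
        calc circuitWeight A (ℓ-m) c₂ + circuitWeight A m (fun k => c (p+k))
            ≤ ((((ℓ - m : ℕ) : ℝ) * μ : ℝ) : WithBot ℝ) + ((((m:ℕ) : ℝ) * μ : ℝ) : WithBot ℝ) :=
              add_le_add hw2 hw1
          _ = ((((ℓ:ℕ) : ℝ) * μ : ℝ) : WithBot ℝ) := by
              rw [← WithBot.coe_add, WithBot.coe_inj]
              have : ((ℓ - m : ℕ) : ℝ) = (ℓ : ℝ) - (m : ℝ) := by
                exact_mod_cast Nat.cast_sub (by omega)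
              rw [this]; ring

lemma tpow_card_bound {n : ℕ} (A : Fin n → Fin n → WithBot ℝ) (μ : ℝ)
    (hcirc : ∀ ℓ (c : ℕ → Fin n), IsCircuit A ℓ c →
      circuitWeight A ℓ c ≤ ((((ℓ : ℝ) * μ) : ℝ) : WithBot ℝ))
    (i k : Fin n) :
    tpow A n i k = ⊥ ∨ ∃ ℓ < n, tpow A n i k
      ≤ tpow A ℓ i k + ((((n - ℓ : ℕ) : ℝ) * μ : ℝ) : WithBot ℝ) := by
  by_cases hb : tpow A n i k = ⊥
  · exact Or.inl hb
  right
  obtain ⟨c, hc0, hcn, hcv, hcw⟩ := tpow_attained A n i k hb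
  obtain ⟨p, q, hpq, hqn, hcpq⟩ := exists_repeat c
  obtain ⟨c₂, hc20, hc2L, hc2v, hc1circ, hweq⟩ := surgery A n c hcv p q hpq hqn hcpq
  set m := q - p with hm
  refine ⟨n - m, by omega, ?_⟩
  have h1 : circuitWeight A (n - m) c₂ ≤ tpow A (n-m) i k := by
    have := walk_le_tpow A (n-m) c₂
    rwa [hc20, hc2L, hc0, hcn] at this
  have h2 : circuitWeight A m (fun j => c (p+j)) ≤ (((m : ℝ) * μ : ℝ) : WithBot ℝ) :=
    hcirc m _ hc1circ
  have h3 : ((n - (n - m) : ℕ) : ℝ) = ((m : ℕ) : ℝ) := by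
    congr 1
    omega
  rw [← hcw, hweq, h3]
  exact add_le_add h1 h2

lemma exists_lyapunov {n : ℕ} (A : Fin n → Fin n → WithBot ℝ) (hn : 0 < n) (μ : ℝ)
    (hcirc : ∀ ℓ (c : ℕ → Fin n), IsCircuit A ℓ c →
      circuitWeight A ℓ c ≤ ((((ℓ : ℝ) * μ) : ℝ) : WithBot ℝ)) :
    ∃ v : Fin n → ℝ, ∀ i j, A i j + ((v j : ℝ) : WithBot ℝ) ≤ ((μ + v i : ℝ) : WithBot ℝ) := by
  set v' : Fin n → WithBot ℝ := fun i =>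
    (Finset.range n).sup fun ℓ => Finset.univ.sup fun k =>
      tpow A ℓ i k + ((-(ℓ : ℝ) * μ : ℝ) : WithBot ℝ) with hv'
  have h0 : ∀ i, (0 : WithBot ℝ) ≤ v' i := by
    intro i
    have t1 : (0 : WithBot ℝ) = tpow A 0 i i + ((-(0:ℕ) * μ : ℝ) : WithBot ℝ) := by
      show (0 : WithBot ℝ) = (if i = i then (0:WithBot ℝ) else ⊥) + _
      rw [if_pos rfl]
      norm_num
    rw [t1]
    exact le_trans (Finset.le_sup (f := fun k => tpow A 0 i k + ((-(0:ℕ) * μ : ℝ) : WithBot ℝ))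
        (Finset.mem_univ i))
      (Finset.le_sup (f := fun ℓ => Finset.univ.sup fun k =>
        tpow A ℓ i k + ((-(ℓ : ℝ) * μ : ℝ) : WithBot ℝ)) (Finset.mem_range.mpr hn))
  have hvne : ∀ i, v' i ≠ ⊥ := fun i hb => by
    have := h0 i
    rw [hb] at this
    simp at this
  choose vr hvr using fun i => WithBot.ne_bot_iff_exists.mp (hvne i)
  refine ⟨vr, fun i j => ?_⟩
  -- key claim: every power term up to n is ≤ v' i
  have hclaim : ∀ ℓ ≤ n, ∀ k, tpow A ℓ i k + ((-(ℓ : ℝ) * μ : ℝ) : WithBot ℝ) ≤ v' i := by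
    intro ℓ hℓ k
    rcases Nat.lt_or_ge ℓ n with hlt | hge
    · exact le_trans (Finset.le_sup (f := fun k => tpow A ℓ i k + ((-(ℓ : ℝ) * μ : ℝ) : WithBot ℝ))
          (Finset.mem_univ k))
        (Finset.le_sup (f := fun ℓ => Finset.univ.sup fun k =>
          tpow A ℓ i k + ((-(ℓ : ℝ) * μ : ℝ) : WithBot ℝ)) (Finset.mem_range.mpr hlt))
    · have hln : ℓ = n := by omega
      subst hln
      rcases tpow_card_bound A μ hcirc i k with hb | ⟨ℓ₂, hℓ₂, hle⟩
      · rw [hb]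
        simp
      · calc tpow A ℓ i k + ((-(ℓ : ℝ) * μ : ℝ) : WithBot ℝ)
            ≤ (tpow A ℓ₂ i k + ((((ℓ - ℓ₂ : ℕ) : ℝ) * μ : ℝ) : WithBot ℝ))
              + ((-(ℓ : ℝ) * μ : ℝ) : WithBot ℝ) := add_le_add_left hle _
          _ = tpow A ℓ₂ i k + ((-(ℓ₂ : ℝ) * μ : ℝ) : WithBot ℝ) := by
              rw [add_assoc, ← WithBot.coe_add]
              congr 2
              have : ((ℓ - ℓ₂ : ℕ) : ℝ) = (ℓ : ℝ) - (ℓ₂ : ℝ) := by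
                exact_mod_cast Nat.cast_sub (by omega)
              rw [this]; ring
          _ ≤ v' i := le_trans
              (Finset.le_sup (f := fun k => tpow A ℓ₂ i k + ((-(ℓ₂ : ℝ) * μ : ℝ) : WithBot ℝ))
                (Finset.mem_univ k))
              (Finset.le_sup (f := fun ℓ => Finset.univ.sup fun k =>
                tpow A ℓ i k + ((-(ℓ : ℝ) * μ : ℝ) : WithBot ℝ)) (Finset.mem_range.mpr hℓ₂))
  -- now the main inequality
  have hmain : A i j + v' j ≤ ((μ : ℝ) : WithBot ℝ) + v' i := by
    rw [hv']
    simp only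
    rw [← sup_add_left' (Finset.range n) (A i j)]
    refine Finset.sup_le fun ℓ hℓ => ?_
    rw [← sup_add_left' Finset.univ (A i j)]
    refine Finset.sup_le fun k _ => ?_
    have step1 : A i j + (tpow A ℓ j k + ((-(ℓ : ℝ) * μ : ℝ) : WithBot ℝ))
        = (A i j + tpow A ℓ j k) + ((-(ℓ : ℝ) * μ : ℝ) : WithBot ℝ) := by
      rw [add_assoc]
    rw [step1]
    have step2 : A i j + tpow A ℓ j k ≤ tpow A (ℓ+1) i k := by
      rw [tpow_succ_left]
      exact Finset.le_sup (f := fun j' => A i j' + tpow A ℓ j' k) (Finset.mem_univ j)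
    have step3 : tpow A (ℓ+1) i k + ((-((ℓ+1) : ℝ) * μ : ℝ) : WithBot ℝ) ≤ v' i := by
      have := hclaim (ℓ+1) (by rw [Finset.mem_range] at hℓ; omega) k
      convert this using 3
      push_cast
      ring
    calc (A i j + tpow A ℓ j k) + ((-(ℓ : ℝ) * μ : ℝ) : WithBot ℝ)
        ≤ tpow A (ℓ+1) i k + ((-(ℓ : ℝ) * μ : ℝ) : WithBot ℝ) := add_le_add_left step2 _
      _ = ((μ : ℝ) : WithBot ℝ) + (tpow A (ℓ+1) i k + ((-((ℓ+1) : ℝ) * μ : ℝ) : WithBot ℝ)) := by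
          rw [add_comm ((μ : ℝ) : WithBot ℝ), add_assoc, ← WithBot.coe_add]
          congr 2
          ring
      _ ≤ ((μ : ℝ) : WithBot ℝ) + v' i := add_le_add_right step3 _
  rw [← hvr i, ← hvr j] at hmain
  calc A i j + ((vr j : ℝ) : WithBot ℝ) ≤ ((μ : ℝ) : WithBot ℝ) + ((vr i : ℝ) : WithBot ℝ) := hmain
    _ = ((μ + vr i : ℝ) : WithBot ℝ) := by rw [← WithBot.coe_add]

end Helpers3
section Helpers4
open Finset

lemma weight_shift {n : ℕ} (A : Fin n → Fin n → WithBot ℝ) (t : ℝ) (ℓ : ℕ) (c : ℕ → Fin n) :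
    circuitWeight (fun i j => A i j + ((t : ℝ) : WithBot ℝ)) ℓ c
      = circuitWeight A ℓ c + ((((ℓ : ℝ) * t : ℝ)) : WithBot ℝ) := by
  induction ℓ with
  | zero => simp [circuitWeight]
  | succ ℓ ih =>
      have e1 : circuitWeight (fun i j => A i j + ((t : ℝ) : WithBot ℝ)) (ℓ+1) c
          = circuitWeight (fun i j => A i j + ((t : ℝ) : WithBot ℝ)) ℓ c
            + (A (c ℓ) (c (ℓ+1)) + ((t : ℝ) : WithBot ℝ)) :=
        Finset.sum_range_succ _ _
      have e2 : circuitWeight A (ℓ+1) c = circuitWeight A ℓ c + A (c ℓ) (c (ℓ+1)) :=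
        Finset.sum_range_succ _ _
      rw [e1, e2, ih]
      have e3 : ((((ℓ+1 : ℕ) : ℝ) * t : ℝ) : WithBot ℝ)
          = (((ℓ:ℝ)*t : ℝ) : WithBot ℝ) + ((t:ℝ) : WithBot ℝ) := by
        rw [← WithBot.coe_add, WithBot.coe_inj]
        push_cast
        ring
      rw [e3]
      abel

lemma exists_neg_mu {n : ℕ} (J : Fin n → Fin n → WithBot ℝ) (hn : 0 < n)
    (hneg : ∀ lam : ℝ, IsEigenvalue J (lam : WithBot ℝ) → lam < 0) :
    ∃ μ : ℝ, μ < 0 ∧ ∀ ℓ (c : ℕ → Fin n), IsCircuit J ℓ c →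
      circuitWeight J ℓ c ≤ ((((ℓ : ℝ) * μ) : ℝ) : WithBot ℝ) := by
  classical
  set ext : (Fin (n+1) → Fin n) → ℕ → Fin n :=
    fun c k => c ⟨min k n, by omega⟩ with hext
  set S : Finset (Fin n × (Fin (n+1) → Fin n)) :=
    Finset.univ.filter (fun γ => IsCircuit J ((γ.1 : ℕ) + 1) (ext γ.2)) with hS
  have hencode : ∀ (ℓ : ℕ) (c : ℕ → Fin n), ℓ ≤ n → IsCircuit J ℓ c →
      ∃ γ ∈ S, (γ.1 : ℕ) + 1 = ℓ ∧
        circuitWeight J ((γ.1 : ℕ)+1) (ext γ.2) = circuitWeight J ℓ c := by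
    intro ℓ c hln hc
    obtain ⟨h1, h2, h3⟩ := hc
    set c' : Fin (n+1) → Fin n := fun k => c (min k ℓ) with hc'
    have hck : ∀ k', k' ≤ ℓ → ext c' k' = c k' := by
      intro k' hk'
      show c (min (min k' n) ℓ) = c k'
      congr 1
      omega
    have hγ1 : ((⟨ℓ-1, by omega⟩ : Fin n) : ℕ) + 1 = ℓ := by simp; omega
    have hmem : IsCircuit J (((⟨ℓ-1, by omega⟩ : Fin n) : ℕ) + 1) (ext c') := by
      rw [hγ1]
      refine ⟨h1, ?_, ?_⟩
      · rw [hck ℓ le_rfl, hck 0 (by omega), h2]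
      · intro k hk
        rw [hck k (by omega), hck (k+1) (by omega)]
        exact h3 k hk
    refine ⟨(⟨ℓ-1, by omega⟩, c'), Finset.mem_filter.mpr ⟨Finset.mem_univ _, hmem⟩, hγ1, ?_⟩
    refine Finset.sum_congr (by rw [hγ1]) fun k hk => ?_
    rw [Finset.mem_range] at hk
    rw [hck k (by omega), hck (k+1) (by omega)]
  rcases S.eq_empty_or_nonempty with hS0 | hS1
  · -- no circuits at all
    have hnoc : ∀ (ℓ : ℕ) (c : ℕ → Fin n), ¬ IsCircuit J ℓ c := by
      intro ℓ c hc
      by_cases hln : ℓ ≤ n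
      · obtain ⟨γ, hγ, _⟩ := hencode ℓ c hln hc
        rw [hS0] at hγ
        exact absurd hγ (Finset.notMem_empty γ)
      · obtain ⟨h1, h2, h3⟩ := hc
        obtain ⟨p, q, hpq, hqn, hcpq⟩ := exists_repeat c
        obtain ⟨c₂, _, _, _, hc1circ, _⟩ := surgery J ℓ c h3 p q hpq (by omega) hcpq
        obtain ⟨γ, hγ, _⟩ := hencode (q-p) _ (by omega) hc1circ
        rw [hS0] at hγ
        exact absurd hγ (Finset.notMem_empty γ)
    exact ⟨-1, by norm_num, fun ℓ c hc => absurd hc (hnoc ℓ c)⟩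
  · set mean : (Fin n × (Fin (n+1) → Fin n)) → ℝ :=
      fun γ => (WithBot.unbotD 0 (circuitWeight J ((γ.1 : ℕ)+1) (ext γ.2))) / ((γ.1 : ℕ)+1) with hmean
    set lam : ℝ := S.sup' hS1 mean with hlam
    have hshort : ∀ (ℓ : ℕ) (c : ℕ → Fin n), ℓ ≤ n → IsCircuit J ℓ c →
        circuitWeight J ℓ c ≤ ((((ℓ : ℝ) * lam) : ℝ) : WithBot ℝ) := by
      intro ℓ c hln hc
      obtain ⟨γ, hγ, hγℓ, hγw⟩ := hencode ℓ c hln hc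
      have hcγ : IsCircuit J ((γ.1 : ℕ)+1) (ext γ.2) := (Finset.mem_filter.mp hγ).2
      obtain ⟨w, hw⟩ := weight_coe J ((γ.1 : ℕ)+1) (ext γ.2) hcγ.2.2
      have hmγ : mean γ = w / ℓ := by
        rw [hmean]
        simp only
        rw [hw, WithBot.unbotD_coe]
        have hc1 : ((ℓ:ℕ) : ℝ) = (((γ.1 : ℕ) : ℝ) + 1) := by exact_mod_cast hγℓ.symm
        rw [hc1]
      have hm_le : mean γ ≤ lam := Finset.le_sup' mean hγ
      have hwle : w ≤ (ℓ : ℝ) * lam := by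
        have hℓpos : (0 : ℝ) < (ℓ : ℝ) := by
          have : 1 ≤ ℓ := hc.1
          exact_mod_cast Nat.pos_of_ne_zero (by omega)
        rw [hmγ, div_le_iff₀ hℓpos] at hm_le
        nlinarith [hm_le]
      rw [← hγw, hw]
      exact_mod_cast hwle
    have hall := circuit_weight_le J lam hshort
    -- construct the eigenvector to show lam < 0
    obtain ⟨γ0, hγ0, hγ0m⟩ := Finset.exists_mem_eq_sup' hS1 mean
    have hcγ0 : IsCircuit J ((γ0.1 : ℕ)+1) (ext γ0.2) := (Finset.mem_filter.mp hγ0).2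
    set m : ℕ := (γ0.1 : ℕ) + 1 with hm
    set cs : ℕ → Fin n := ext γ0.2 with hcs
    have hm1 : 1 ≤ m := by omega
    have hmn : m ≤ n := by have := γ0.1.isLt; omega
    obtain ⟨w0, hw0⟩ := weight_coe J m cs hcγ0.2.2
    have hw0v : w0 = (m : ℝ) * lam := by
      have : lam = mean γ0 := hγ0m
      rw [hmean] at this
      simp only at this
      rw [← hcs, ← hm, hw0, WithBot.unbotD_coe] at this
      have hmpos : (0:ℝ) < (m : ℝ) := by exact_mod_cast hm1
      field_simp at this
      have hcast : ((m:ℕ) : ℝ) = (((γ0.1 : ℕ) : ℝ) + 1) := by rw [hm]; push_cast; ring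
      rw [hcast]
      linarith [this]
    set js : Fin n := cs 0 with hjs
    set B : Fin n → Fin n → WithBot ℝ := fun i j => J i j + ((-lam : ℝ) : WithBot ℝ) with hB
    have hBall : ∀ (ℓ : ℕ) (c : ℕ → Fin n), IsCircuit B ℓ c →
        circuitWeight B ℓ c ≤ ((((ℓ:ℝ) * 0 : ℝ)) : WithBot ℝ) := by
      intro ℓ c hc
      have hcJ : IsCircuit J ℓ c := by
        refine ⟨hc.1, hc.2.1, fun k hk => ?_⟩
        have := hc.2.2 k hk
        rw [hB] at this
        simp only [ne_eq, WithBot.add_eq_bot, WithBot.coe_ne_bot, or_false] at this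
        exact this
      have hsh := weight_shift J (-lam) ℓ c
      rw [hB]
      rw [hsh]
      calc circuitWeight J ℓ c + (((ℓ:ℝ) * -lam : ℝ) : WithBot ℝ)
          ≤ (((ℓ:ℝ) * lam : ℝ) : WithBot ℝ) + (((ℓ:ℝ) * -lam : ℝ) : WithBot ℝ) :=
            add_le_add_left (hall ℓ c hcJ) _
        _ = ((((ℓ:ℝ) * 0 : ℝ)) : WithBot ℝ) := by
            rw [← WithBot.coe_add, WithBot.coe_inj]
            ring
    set x : Fin n → WithBot ℝ := fun i => (Finset.range n).sup fun ℓ => tpow B ℓ i js with hx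
    have hx_le : ∀ ℓ, ℓ < n → ∀ i, tpow B ℓ i js ≤ x i := fun ℓ hℓ i =>
      Finset.le_sup (f := fun ℓ => tpow B ℓ i js) (Finset.mem_range.mpr hℓ)
    have hx0 : (0 : WithBot ℝ) ≤ x js := by
      have t1 : (0 : WithBot ℝ) = tpow B 0 js js := by
        show (0 : WithBot ℝ) = if js = js then (0 : WithBot ℝ) else ⊥
        rw [if_pos rfl]
      rw [t1]
      exact hx_le 0 hn js
    have claimR : ∀ i, (Finset.univ.sup fun j => B i j + x j) = x i := by
      intro i
      apply le_antisymm
      · refine Finset.sup_le fun j _ => ?_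
        have hxj : x j = (Finset.range n).sup fun ℓ => tpow B ℓ j js := rfl
        rw [hxj, ← sup_add_left']
        refine Finset.sup_le fun ℓ hℓ => ?_
        have h1 : B i j + tpow B ℓ j js ≤ tpow B (ℓ+1) i js := by
          rw [tpow_succ_left]
          exact Finset.le_sup (f := fun j' => B i j' + tpow B ℓ j' js) (Finset.mem_univ j)
        refine le_trans h1 ?_
        rcases Nat.lt_or_ge (ℓ+1) n with h | h
        · exact hx_le (ℓ+1) h i
        · have hℓn : ℓ + 1 = n := by
            rw [Finset.mem_range] at hℓ
            omega
          rw [hℓn]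
          rcases tpow_card_bound B 0 hBall i js with hb | ⟨ℓ₂, hℓ₂, hle⟩
          · rw [hb]
            exact bot_le
          · refine le_trans hle ?_
            have e0 : ((((n-ℓ₂:ℕ):ℝ) * 0 : ℝ) : WithBot ℝ) = (0 : WithBot ℝ) := by
              rw [mul_zero]
              exact WithBot.coe_zero
            rw [e0, add_zero]
            exact hx_le ℓ₂ hℓ₂ i
      · refine Finset.sup_le fun ℓ hℓ => ?_
        rcases Nat.eq_zero_or_pos ℓ with h0' | hpos
        · subst h0'
          show (if i = js then (0 : WithBot ℝ) else ⊥) ≤ _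
          by_cases hij : i = js
          · rw [if_pos hij, hij]
            have hwB : circuitWeight B m cs = (((0:ℝ)) : WithBot ℝ) := by
              have := weight_shift J (-lam) m cs
              rw [hB, this, hw0, hw0v, ← WithBot.coe_add, WithBot.coe_inj]
              ring
            have h01 : ((0:ℝ) : WithBot ℝ) ≤ tpow B m js js := by
              have hwk := walk_le_tpow B m cs
              rw [hcγ0.2.1] at hwk
              rw [← hwB]
              exact hwk
            have h02 : tpow B m js js ≤ Finset.univ.sup fun j => B js j + x j := by
              have hm' : m = (m-1)+1 := by omega
              rw [hm', tpow_succ_left]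
              refine Finset.sup_le fun j _ => ?_
              exact le_trans (add_le_add_right (hx_le (m-1) (by omega) j) _)
                (Finset.le_sup (f := fun j => B js j + x j) (Finset.mem_univ j))
            exact le_trans (by rw [← WithBot.coe_zero]) (le_trans h01 h02)
          · rw [if_neg hij]
            exact bot_le
        · have hℓ' : ℓ = (ℓ-1)+1 := by omega
          rw [hℓ', tpow_succ_left]
          refine Finset.sup_le fun j _ => ?_
          have hℓn : ℓ - 1 < n := by
            rw [Finset.mem_range] at hℓ
            omega
          exact le_trans (add_le_add_right (hx_le (ℓ-1) hℓn j) _)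
            (Finset.le_sup (f := fun j => B i j + x j) (Finset.mem_univ j))
    have heig : IsEigenvalue J ((lam : ℝ) : WithBot ℝ) := by
      refine ⟨x, ?_, ?_⟩
      · intro hbot
        have : x js = ⊥ := by rw [hbot]; rfl
        rw [this] at hx0
        simp at hx0
      · intro i
        have hterm : ∀ j, J i j + x j = ((lam : ℝ) : WithBot ℝ) + (B i j + x j) := by
          intro j
          have e1 : B i j + x j = ((-lam : ℝ) : WithBot ℝ) + (J i j + x j) := by
            rw [hB]
            show J i j + ((-lam : ℝ) : WithBot ℝ) + x j = _
            rw [add_comm (J i j) (((-lam : ℝ) : WithBot ℝ)), add_assoc]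
          rw [e1, ← add_assoc, ← WithBot.coe_add]
          have h0' : lam + -lam = 0 := by ring
          rw [h0', WithBot.coe_zero, zero_add]
        show (Finset.univ.sup fun j => J i j + x j) = _
        calc (Finset.univ.sup fun j => J i j + x j)
            = Finset.univ.sup fun j => ((lam : ℝ) : WithBot ℝ) + (B i j + x j) :=
              Finset.sup_congr rfl fun j _ => hterm j
          _ = ((lam : ℝ) : WithBot ℝ) + Finset.univ.sup fun j => B i j + x j :=
              sup_add_left' _ _ _
          _ = ((lam : ℝ) : WithBot ℝ) + x i := by rw [claimR i]
    exact ⟨lam, hneg lam heig, hall⟩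

end Helpers4
section Helpers5
open Finset

lemma E_bot : E ⊥ = 0 := rfl
lemma E_coe (r : ℝ) : E (r : WithBot ℝ) = Real.exp r := rfl

lemma E_nonneg (a : WithBot ℝ) : 0 ≤ E a := by
  induction a using WithBot.recBotCoe with
  | bot => exact le_refl 0
  | coe r => exact (Real.exp_pos r).le

lemma E_mono : Monotone E := by
  intro a b h
  induction a using WithBot.recBotCoe with
  | bot => exact E_nonneg b
  | coe r =>
    induction b using WithBot.recBotCoe with
    | bot => exact absurd h (by simp)
    | coe s =>
        rw [E_coe, E_coe]
        exact Real.exp_le_exp.mpr (WithBot.coe_le_coe.mp h)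

lemma E_coe_add (t : ℝ) (a : WithBot ℝ) :
    E (((t : ℝ) : WithBot ℝ) + a) = Real.exp t * E a := by
  induction a using WithBot.recBotCoe with
  | bot => rw [WithBot.add_bot]; show (0:ℝ) = Real.exp t * 0; rw [mul_zero]
  | coe r => rw [← WithBot.coe_add, E_coe, E_coe, Real.exp_add]

lemma coe_add_cancel (a : WithBot ℝ) (t : ℝ) :
    a + ((t : ℝ) : WithBot ℝ) + ((-t : ℝ) : WithBot ℝ) = a := by
  rw [add_assoc, ← WithBot.coe_add]
  have h : t + -t = 0 := by ring
  rw [h, WithBot.coe_zero, add_zero]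

lemma tnorm_nonneg {n : ℕ} (x : Fin n → WithBot ℝ) : 0 ≤ tnorm x := E_nonneg _

lemma tnorm_eq_zero_bot {n : ℕ} (x : Fin n → WithBot ℝ) (h : tnorm x = 0) : x = botVec n := by
  have hsup : Finset.univ.sup x = ⊥ := by
    by_contra hb
    obtain ⟨r, hr⟩ := WithBot.ne_bot_iff_exists.mp hb
    rw [tnorm, ← hr, E_coe] at h
    exact absurd h (Real.exp_pos r).ne'
  funext i
  have := Finset.le_sup (f := x) (Finset.mem_univ i)
  rw [hsup] at this
  exact le_bot_iff.mp this

lemma E_le_tnorm {n : ℕ} (x : Fin n → WithBot ℝ) (i : Fin n) : E (x i) ≤ tnorm x :=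
  E_mono (Finset.le_sup (Finset.mem_univ i))

end Helpers5

/-- Theorem 4 of the paper: if `f(ε) = ε`, `f` is tropical-linearly approximated
at `ε` with tropical Jacobian `J`, and the maximum eigenvalue of `J` is negative (every real
eigenvalue of `J` is negative), then the fixed point `ε` is asymptotically stable. -/
theorem stmt_2 {n : ℕ} (f : (Fin n → WithBot ℝ) → (Fin n → WithBot ℝ))
    (J : Fin n → Fin n → WithBot ℝ) (hf : f (botVec n) = botVec n)
    (happrox : ∀ i : Fin n, IsTropLinApprox (fun x => f x i) (J i))
    (hneg : ∀ lam : ℝ, IsEigenvalue J (lam : WithBot ℝ) → lam < 0) :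
    TropAsymptoticallyStable f := by
  rcases Nat.eq_zero_or_pos n with hn0 | hn
  · subst hn0
    have htz : ∀ x : Fin 0 → WithBot ℝ, tnorm x = 0 := by
      intro x
      show E (Finset.univ.sup x) = 0
      rw [Finset.univ_eq_empty, Finset.sup_empty]
      rfl
    constructor
    · intro α hα
      exact ⟨1, one_pos, fun x0 _ t => by rw [htz]; exact hα⟩
    · refine ⟨1, one_pos, fun x0 _ => ?_⟩
      simp only [htz]
      exact tendsto_const_nhds
  obtain ⟨μ, hμ, hcirc⟩ := exists_neg_mu J hn hneg
  obtain ⟨v, hKey⟩ := exists_lyapunov J hn μ hcirc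
  have hne : (Finset.univ : Finset (Fin n)).Nonempty := ⟨⟨0, hn⟩, Finset.mem_univ _⟩
  set vmax : ℝ := Finset.univ.sup' hne v with hvmax
  set vmin : ℝ := Finset.univ.inf' hne v with hvmin
  set N : (Fin n → WithBot ℝ) → ℝ :=
    fun x => Finset.univ.sup' hne fun i => E (x i) * Real.exp (-(v i)) with hNdef
  have hterm_le : ∀ x (i : Fin n), E (x i) * Real.exp (-(v i)) ≤ N x := by
    intro x i
    exact Finset.le_sup' (f := fun i => E (x i) * Real.exp (-(v i))) (Finset.mem_univ i)
  have hNnonneg : ∀ x, 0 ≤ N x := by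
    intro x
    exact le_trans (mul_nonneg (E_nonneg _) (Real.exp_pos _).le) (hterm_le x ⟨0, hn⟩)
  have htN : ∀ x, tnorm x ≤ Real.exp vmax * N x := by
    intro x
    obtain ⟨i, _, hi⟩ := Finset.exists_mem_eq_sup Finset.univ hne x
    have h1 : tnorm x = E (x i) := congrArg E hi
    have h2 : E (x i) = (E (x i) * Real.exp (-(v i))) * Real.exp (v i) := by
      rw [mul_assoc, ← Real.exp_add]
      have : -(v i) + v i = 0 := by ring
      rw [this, Real.exp_zero, mul_one]
    rw [h1, h2, mul_comm (Real.exp vmax)]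
    exact mul_le_mul (hterm_le x i) (Real.exp_le_exp.mpr (Finset.le_sup' v (Finset.mem_univ i)))
      (Real.exp_pos _).le (hNnonneg x)
  have hNt : ∀ x, N x ≤ Real.exp (-vmin) * tnorm x := by
    intro x
    refine Finset.sup'_le _ _ fun i _ => ?_
    rw [mul_comm (Real.exp (-vmin))]
    exact mul_le_mul (E_le_tnorm x i)
      (Real.exp_le_exp.mpr (neg_le_neg (Finset.inf'_le v (Finset.mem_univ i))))
      (Real.exp_pos _).le (tnorm_nonneg x)
  have hNbot : N (botVec n) = 0 := by
    have he : (fun i => E ((botVec n) i) * Real.exp (-(v i))) = fun _ : Fin n => (0:ℝ) := by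
      funext i
      show E ⊥ * Real.exp (-(v i)) = 0
      rw [E_bot, zero_mul]
    rw [hNdef]
    simp only [he]
    exact Finset.sup'_const hne 0
  set r0 : ℝ := Real.exp μ with hr0def
  have hr01 : r0 < 1 := Real.exp_lt_one_iff.mpr hμ
  have hr00 : 0 < r0 := Real.exp_pos μ
  set ρ : ℝ := (1 + r0) / 2 with hρdef
  have hρ0 : 0 < ρ := by rw [hρdef]; linarith
  have hρ1 : ρ < 1 := by rw [hρdef]; linarith
  set η : ℝ := (1 - r0) / 2 * Real.exp (vmin - vmax) with hηdef
  have hη : 0 < η := by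
    rw [hηdef]
    have := Real.exp_pos (vmin - vmax)
    nlinarith
  choose δf hδf0 hδf using fun i => happrox i η hη
  set δ0 : ℝ := Finset.univ.inf' hne δf with hδ0def
  have hδ0 : 0 < δ0 := by
    rw [hδ0def]
    exact (Finset.lt_inf'_iff hne).mpr fun i _ => hδf0 i
  -- one-step contraction of the weighted norm
  have hdot : ∀ x (i : Fin n), E (tdot (J i) x) ≤ Real.exp (μ + v i) * N x := by
    intro x i
    show E (Finset.univ.sup fun j => J i j + x j) ≤ _
    obtain ⟨j, _, hj⟩ := Finset.exists_mem_eq_sup Finset.univ hne (fun j => J i j + x j)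
    rw [hj]
    have h1 : J i j + x j ≤ ((μ + v i - v j : ℝ) : WithBot ℝ) + x j := by
      calc J i j + x j = (J i j + ((v j : ℝ) : WithBot ℝ) + ((-(v j) : ℝ) : WithBot ℝ)) + x j := by
            rw [coe_add_cancel]
        _ ≤ (((μ + v i : ℝ) : WithBot ℝ) + ((-(v j) : ℝ) : WithBot ℝ)) + x j :=
            add_le_add_left (add_le_add_left (hKey i j) _) _
        _ = ((μ + v i - v j : ℝ) : WithBot ℝ) + x j := by
            have he : μ + v i + -(v j) = μ + v i - v j := by ring
            rw [← WithBot.coe_add, he]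
    calc E (J i j + x j) ≤ E (((μ + v i - v j : ℝ) : WithBot ℝ) + x j) := E_mono h1
      _ = Real.exp (μ + v i - v j) * E (x j) := E_coe_add _ _
      _ = Real.exp (μ + v i) * (E (x j) * Real.exp (-(v j))) := by
          rw [show μ + v i - v j = (μ + v i) + -(v j) from by ring, Real.exp_add]
          ring
      _ ≤ Real.exp (μ + v i) * N x :=
          mul_le_mul_of_nonneg_left (hterm_le x j) (Real.exp_pos _).le
  have hstep : ∀ x, tnorm x < δ0 → N (f x) ≤ ρ * N x := by
    intro x hx
    by_cases h0 : tnorm x = 0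
    · have hxb : x = botVec n := tnorm_eq_zero_bot x h0
      have hz : N (f x) = 0 := by rw [hxb, hf]; exact hNbot
      rw [hz]
      exact mul_nonneg hρ0.le (hNnonneg x)
    · have htx : 0 < tnorm x := lt_of_le_of_ne (tnorm_nonneg x) (Ne.symm h0)
      refine Finset.sup'_le _ _ fun i _ => ?_
      have happx := hδf i x htx (lt_of_lt_of_le hx (by
        rw [hδ0def]
        exact Finset.inf'_le δf (Finset.mem_univ i)))
      have hfi : E (f x i) ≤ E (tdot (J i) x) + η * tnorm x := by
        have := abs_le.mp happx
        linarith [this.2]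
      have hexp1 : Real.exp (μ + v i) * Real.exp (-(v i)) = r0 := by
        rw [hr0def, ← Real.exp_add]
        congr 1
        ring
      have hexp3 : Real.exp (vmin - vmax) * Real.exp vmax * Real.exp (-vmin) = 1 := by
        rw [← Real.exp_add, ← Real.exp_add,
          show vmin - vmax + vmax + -vmin = 0 from by ring, Real.exp_zero]
      calc E (f x i) * Real.exp (-(v i))
          ≤ (Real.exp (μ + v i) * N x + η * tnorm x) * Real.exp (-(v i)) :=
            mul_le_mul_of_nonneg_right
              (le_trans hfi (add_le_add_left (hdot x i) _)) (Real.exp_pos _).le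
        _ = r0 * N x + η * tnorm x * Real.exp (-(v i)) := by
            rw [add_mul, mul_right_comm, hexp1]
        _ ≤ r0 * N x + η * (Real.exp vmax * N x) * Real.exp (-vmin) := by
            have b1 : η * tnorm x ≤ η * (Real.exp vmax * N x) :=
              mul_le_mul_of_nonneg_left (htN x) hη.le
            have b2 : Real.exp (-(v i)) ≤ Real.exp (-vmin) :=
              Real.exp_le_exp.mpr (neg_le_neg (Finset.inf'_le v (Finset.mem_univ i)))
            have b3 : η * tnorm x * Real.exp (-(v i)) ≤ η * (Real.exp vmax * N x) * Real.exp (-vmin) :=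
              mul_le_mul b1 b2 (Real.exp_pos _).le
                (mul_nonneg hη.le (mul_nonneg (Real.exp_pos _).le (hNnonneg x)))
            linarith
        _ = r0 * N x + (1 - r0)/2 * N x := by
            rw [hηdef]
            linear_combination ((1 - r0)/2 * N x) * hexp3
        _ = ρ * N x := by rw [hρdef]; ring
  set ε0 : ℝ := δ0 * Real.exp (-vmax) with hε0def
  have hexpmm : Real.exp vmax * Real.exp (-vmax) = 1 := by
    rw [← Real.exp_add, show vmax + -vmax = 0 from by ring, Real.exp_zero]
  have hiter : ∀ x0, N x0 < ε0 → ∀ t, N (f^[t] x0) ≤ ρ ^ t * N x0 := by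
    intro x0 h0 t
    induction t with
    | zero => simp
    | succ t ih =>
        have hρt1 : ρ ^ t ≤ 1 := pow_le_one₀ hρ0.le hρ1.le
        have hNt' : N (f^[t] x0) < ε0 := by
          have := mul_le_mul_of_nonneg_right hρt1 (hNnonneg x0)
          rw [one_mul] at this
          linarith [ih]
        have htn : tnorm (f^[t] x0) < δ0 := by
          have h1 := htN (f^[t] x0)
          have h2 : Real.exp vmax * N (f^[t] x0) < Real.exp vmax * ε0 :=
            mul_lt_mul_of_pos_left hNt' (Real.exp_pos _)
          have h3 : Real.exp vmax * ε0 = δ0 := by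
            rw [hε0def]
            linear_combination δ0 * hexpmm
          linarith
        rw [Function.iterate_succ_apply']
        calc N (f (f^[t] x0)) ≤ ρ * N (f^[t] x0) := hstep _ htn
          _ ≤ ρ * (ρ ^ t * N x0) := mul_le_mul_of_nonneg_left ih hρ0.le
          _ = ρ ^ (t+1) * N x0 := by ring
  have hkey2 : ∀ (β : ℝ), 0 < β → ∀ x0, tnorm x0 < β * Real.exp (vmin - vmax) →
      N x0 < β * Real.exp (-vmax) := by
    intro β hβ x0 hx0
    have h1 := hNt x0
    have h2 : Real.exp (-vmin) * tnorm x0 < Real.exp (-vmin) * (β * Real.exp (vmin - vmax)) :=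
      mul_lt_mul_of_pos_left hx0 (Real.exp_pos _)
    have h3 : Real.exp (-vmin) * (β * Real.exp (vmin - vmax)) = β * Real.exp (-vmax) := by
      have he : Real.exp (-vmin) * Real.exp (vmin - vmax) = Real.exp (-vmax) := by
        rw [← Real.exp_add]
        congr 1
        ring
      linear_combination β * he
    linarith
  constructor
  · intro α hα
    refine ⟨min δ0 α * Real.exp (vmin - vmax), by positivity, fun x0 hx0 t => ?_⟩
    have hN0 : N x0 < min δ0 α * Real.exp (-vmax) :=
      hkey2 (min δ0 α) (lt_min hδ0 hα) x0 hx0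
    have hN0' : N x0 < ε0 := by
      rw [hε0def]
      have := mul_le_mul_of_nonneg_right (min_le_left δ0 α) (Real.exp_pos (-vmax)).le
      linarith
    have h1 := htN (f^[t] x0)
    have h2 := hiter x0 hN0' t
    have hρt1 : ρ ^ t ≤ 1 := pow_le_one₀ hρ0.le hρ1.le
    have h3 : ρ ^ t * N x0 ≤ N x0 := by
      have := mul_le_mul_of_nonneg_right hρt1 (hNnonneg x0)
      linarith [this]
    have h4 : Real.exp vmax * N (f^[t] x0) ≤ Real.exp vmax * N x0 :=
      mul_le_mul_of_nonneg_left (le_trans h2 h3) (Real.exp_pos _).le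
    have h5 : Real.exp vmax * N x0 < Real.exp vmax * (min δ0 α * Real.exp (-vmax)) :=
      mul_lt_mul_of_pos_left hN0 (Real.exp_pos _)
    have h6 : Real.exp vmax * (min δ0 α * Real.exp (-vmax)) = min δ0 α := by
      linear_combination (min δ0 α) * hexpmm
    have h7 : min δ0 α ≤ α := min_le_right _ _
    linarith
  · refine ⟨δ0 * Real.exp (vmin - vmax), by positivity, fun x0 hx0 => ?_⟩
    have hN0 : N x0 < ε0 := by
      rw [hε0def]
      exact hkey2 δ0 hδ0 x0 hx0
    have hbound : ∀ t, tnorm (f^[t] x0) ≤ (Real.exp vmax * N x0) * ρ ^ t := by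
      intro t
      have h1 := htN (f^[t] x0)
      have h2 := hiter x0 hN0 t
      have h3 : Real.exp vmax * N (f^[t] x0) ≤ Real.exp vmax * (ρ ^ t * N x0) :=
        mul_le_mul_of_nonneg_left h2 (Real.exp_pos _).le
      calc tnorm (f^[t] x0) ≤ Real.exp vmax * N (f^[t] x0) := h1
        _ ≤ Real.exp vmax * (ρ ^ t * N x0) := h3
        _ = (Real.exp vmax * N x0) * ρ ^ t := by ring
    have hgeo : Filter.Tendsto (fun t : ℕ => (Real.exp vmax * N x0) * ρ ^ t)
        Filter.atTop (nhds 0) := by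
      have := (tendsto_pow_atTop_nhds_zero_of_lt_one hρ0.le hρ1).const_mul
        (Real.exp vmax * N x0)
      simpa using this
    exact squeeze_zero (fun t => tnorm_nonneg _) hbound hgeo
end

section
/- Let f : ℝ_max^n → ℝ_max^n satisfy f(ε) = ε, and suppose f is tropical-linearly approximated at ε with tropical Jacobian matrix J ∈ ℝ_max^{n×n}. If the maximum eigenvalue of J is positive — equivalently, some λ ∈ ℝ with λ > 0 is an eigenvalue of J — then the fixed point ε of the difference equation x^{(t+1)} = f(x^{(t)}) is unstable, i.e., not stable. -/
open Filter Topology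

namespace T5
open Finset

variable {n : ℕ}

/-! ### Basic lemmas about `E` -/

lemma E_bot : E (⊥ : WithBot ℝ) = 0 := rfl

lemma E_coe (r : ℝ) : E (r : WithBot ℝ) = Real.exp r := rfl

lemma E_nonneg (a : WithBot ℝ) : 0 ≤ E a := by
  induction a using WithBot.recBotCoe with
  | bot => simp [E_bot]
  | coe r => exact (Real.exp_pos r).le

lemma E_pos {a : WithBot ℝ} (h : a ≠ ⊥) : 0 < E a := by
  induction a using WithBot.recBotCoe with
  | bot => exact absurd rfl h
  | coe r => exact Real.exp_pos r

lemma E_mono : Monotone E := by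
  intro a b hab
  induction a using WithBot.recBotCoe with
  | bot => rw [E_bot]; exact E_nonneg b
  | coe r =>
    induction b using WithBot.recBotCoe with
    | bot => exact absurd hab (by simp)
    | coe s => simpa [E_coe] using Real.exp_le_exp.2 (WithBot.coe_le_coe.1 hab)

lemma E_add (a b : WithBot ℝ) : E (a + b) = E a * E b := by
  induction a using WithBot.recBotCoe with
  | bot => simp [E_bot]
  | coe r =>
    induction b using WithBot.recBotCoe with
    | bot => simp [E_bot]
    | coe s =>
      rw [← WithBot.coe_add]
      show Real.exp (r + s) = Real.exp r * Real.exp s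
      exact Real.exp_add r s

lemma E_le_tnorm (x : Fin n → WithBot ℝ) (i : Fin n) : E (x i) ≤ tnorm x :=
  E_mono (Finset.le_sup (Finset.mem_univ i))

lemma tnorm_nonneg (x : Fin n → WithBot ℝ) : 0 ≤ tnorm x := E_nonneg _

lemma exists_tnorm_eq [Nonempty (Fin n)] (x : Fin n → WithBot ℝ) : ∃ i, tnorm x = E (x i) := by
  obtain ⟨i, -, h⟩ := Finset.exists_mem_eq_sup (univ : Finset (Fin n)) univ_nonempty x
  exact ⟨i, by rw [tnorm, h]⟩

lemma le_E_tdot (a x : Fin n → WithBot ℝ) (k : Fin n) : E (a k) * E (x k) ≤ E (tdot a x) := by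
  rw [← E_add]
  exact E_mono (Finset.le_sup (f := fun j => a j + x j) (Finset.mem_univ k))

lemma exists_E_tdot [Nonempty (Fin n)] (a x : Fin n → WithBot ℝ) :
    ∃ k, E (tdot a x) = E (a k) * E (x k) := by
  obtain ⟨k, -, h⟩ := Finset.exists_mem_eq_sup (univ : Finset (Fin n))
    univ_nonempty (fun j => a j + x j)
  exact ⟨k, by rw [tdot, h, E_add]⟩

/-! ### Chain products for a nonnegative matrix -/

noncomputable def cPm (q : Fin n → Fin n → ℝ) (c : ℕ → Fin n) (ℓ : ℕ) : ℝ :=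
  ∏ k ∈ Finset.range ℓ, q (c k) (c (k + 1))

lemma cPm_zero (q : Fin n → Fin n → ℝ) (c : ℕ → Fin n) : cPm q c 0 = 1 := by simp [cPm]

lemma cPm_succ (q : Fin n → Fin n → ℝ) (c : ℕ → Fin n) (ℓ : ℕ) :
    cPm q c (ℓ + 1) = cPm q c ℓ * q (c ℓ) (c (ℓ + 1)) :=
  Finset.prod_range_succ _ _

lemma cPm_nonneg {q : Fin n → Fin n → ℝ} (hq : ∀ i j, 0 ≤ q i j) (c : ℕ → Fin n) (ℓ : ℕ) :
    0 ≤ cPm q c ℓ :=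
  Finset.prod_nonneg fun _ _ => hq _ _

lemma cPm_cons (q : Fin n → Fin n → ℝ) (c : ℕ → Fin n) (ℓ : ℕ) :
    cPm q c (ℓ + 1) = q (c 0) (c 1) * cPm q (fun k => c (k + 1)) ℓ := by
  rw [cPm, Finset.prod_range_succ' (fun k => q (c k) (c (k + 1))) ℓ, mul_comm]
  rfl

lemma cPm_add (q : Fin n → Fin n → ℝ) (c : ℕ → Fin n) (a m : ℕ) :
    cPm q c (a + m) = cPm q c a * cPm q (fun k => c (a + k)) m := by
  induction m with
  | zero => simp [cPm_zero]
  | succ m ih =>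
    rw [show a + (m + 1) = (a + m) + 1 from rfl, cPm_succ, ih, cPm_succ, mul_assoc]
    rfl

end T5

namespace T5
open Finset

variable {n : ℕ}

/-- Splice out the segment `[a, a+d)` from a chain. -/
def splice (c : ℕ → Fin n) (a d : ℕ) : ℕ → Fin n := fun k => if k < a then c k else c (k + d)

lemma exists_repeat (c : ℕ → Fin n) [Nonempty (Fin n)] : ∃ a b, a < b ∧ b ≤ n ∧ c a = c b := by
  obtain ⟨x, y, hne, heq⟩ := Fintype.exists_ne_map_eq_of_card_lt
    (fun k : Fin (n + 1) => c k.val) (by simp)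
  rcases lt_or_gt_of_ne hne with h | h
  · exact ⟨x.val, y.val, h, Nat.lt_succ_iff.1 y.isLt, heq⟩
  · exact ⟨y.val, x.val, h, Nat.lt_succ_iff.1 x.isLt, heq.symm⟩

lemma splice_zero (c : ℕ → Fin n) {a b : ℕ} (hab : a < b) (hc : c b = c a) :
    splice c a (b - a) 0 = c 0 := by
  by_cases ha : 0 < a
  · simp [splice, ha]
  · have h0 : a = 0 := by omega
    subst h0
    simp only [splice, if_neg (by omega : ¬ (0 < 0)), Nat.zero_add, Nat.sub_zero]
    rw [hc]

lemma splice_last (c : ℕ → Fin n) {a b ℓ : ℕ} (hab : a < b) (hbl : b ≤ ℓ) :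
    splice c a (b - a) (ℓ - (b - a)) = c ℓ := by
  have h1 : ¬ (ℓ - (b - a) < a) := by omega
  simp only [splice, if_neg h1]
  congr 1
  omega

lemma cPm_splice_le (q : Fin n → Fin n → ℝ) (hq : ∀ i j, 0 ≤ q i j) (c : ℕ → Fin n)
    {a b ℓ : ℕ} (hab : a < b) (hbl : b ≤ ℓ) (hc : c b = c a)
    (hmid : cPm q (fun k => c (a + k)) (b - a) ≤ 1) :
    cPm q c ℓ ≤ cPm q (splice c a (b - a)) (ℓ - (b - a)) := by
  have hdecomp : cPm q c ℓ
      = cPm q c a * cPm q (fun k => c (a + k)) (b - a) * cPm q (fun k => c (b + k)) (ℓ - b) := by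
    have h1 : ℓ = a + ((b - a) + (ℓ - b)) := by omega
    conv_lhs => rw [h1]
    rw [cPm_add, cPm_add, ← mul_assoc]
    congr 1
    congr 1
    funext k
    congr 1
    omega
  have hsp : cPm q (splice c a (b - a)) (ℓ - (b - a))
      = cPm q c a * cPm q (fun k => c (b + k)) (ℓ - b) := by
    have h1 : ℓ - (b - a) = a + (ℓ - b) := by omega
    rw [h1, cPm_add]
    congr 1
    · -- products agree below a
      apply Finset.prod_congr rfl
      intro k hk
      have hk' : k < a := Finset.mem_range.1 hk
      by_cases h2 : k + 1 < a
      · simp [splice, hk', h2]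
      · have h3 : k + 1 = a := by omega
        simp only [splice, if_pos hk', if_neg (by omega : ¬ (k + 1 < a))]
        rw [show k + 1 + (b - a) = b by omega, hc, h3]
    · -- shifted parts agree
      apply Finset.prod_congr rfl
      intro k hk
      simp only [splice, if_neg (by omega : ¬ (a + k < a)),
        if_neg (by omega : ¬ (a + (k + 1) < a))]
      congr 1
      · congr 1; omega
      · congr 1; omega
  rw [hdecomp, hsp]
  have h0 : 0 ≤ cPm q c a := cPm_nonneg hq _ _
  have h2 : 0 ≤ cPm q (fun k => c (b + k)) (ℓ - b) := cPm_nonneg hq _ _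
  have h3 := mul_le_mul_of_nonneg_left hmid (mul_nonneg h0 h2)
  calc cPm q c a * cPm q (fun k => c (a + k)) (b - a) * cPm q (fun k => c (b + k)) (ℓ - b)
      = cPm q c a * cPm q (fun k => c (b + k)) (ℓ - b) * cPm q (fun k => c (a + k)) (b - a) := by
        ring
    _ ≤ cPm q c a * cPm q (fun k => c (b + k)) (ℓ - b) * 1 := h3
    _ = cPm q c a * cPm q (fun k => c (b + k)) (ℓ - b) := by ring

lemma closed_le_one [Nonempty (Fin n)] (q : Fin n → Fin n → ℝ) (hq : ∀ i j, 0 ≤ q i j)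
    (hshort : ∀ c ℓ, 1 ≤ ℓ → ℓ ≤ n → c ℓ = c 0 → cPm q c ℓ ≤ 1) :
    ∀ ℓ c, 1 ≤ ℓ → c ℓ = c 0 → cPm q c ℓ ≤ 1 := by
  intro ℓ
  induction ℓ using Nat.strong_induction_on with
  | _ ℓ ih =>
    intro c hℓ hcl
    by_cases hn : ℓ ≤ n
    · exact hshort c ℓ hℓ hn hcl
    · push_neg at hn
      obtain ⟨a, b, hab, hbn, hcab⟩ := exists_repeat c
      have hbl : b ≤ ℓ := by omega
      have hmid : cPm q (fun k => c (a + k)) (b - a) ≤ 1 := by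
        apply ih (b - a) (by omega) _ (by omega)
        show c (a + (b - a)) = c (a + 0)
        rw [show a + (b - a) = b by omega, show a + 0 = a from rfl]
        exact hcab.symm
      have hle := cPm_splice_le q hq c hab hbl hcab.symm hmid
      refine hle.trans (ih (ℓ - (b - a)) (by omega) _ (by omega) ?_)
      rw [splice_last c hab hbl, splice_zero c hab hcab.symm, hcl]

lemma shorten [Nonempty (Fin n)] (q : Fin n → Fin n → ℝ) (hq : ∀ i j, 0 ≤ q i j)
    (hclosed : ∀ ℓ c, 1 ≤ ℓ → c ℓ = c 0 → cPm q c ℓ ≤ 1) :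
    ∀ ℓ c, ∃ ℓ' c', ℓ' ≤ n ∧ c' 0 = c 0 ∧ cPm q c ℓ ≤ cPm q c' ℓ' := by
  intro ℓ
  induction ℓ using Nat.strong_induction_on with
  | _ ℓ ih =>
    intro c
    by_cases hn : ℓ ≤ n
    · exact ⟨ℓ, c, hn, rfl, le_refl _⟩
    · push_neg at hn
      obtain ⟨a, b, hab, hbn, hcab⟩ := exists_repeat c
      have hbl : b ≤ ℓ := by omega
      have hmid : cPm q (fun k => c (a + k)) (b - a) ≤ 1 := by
        apply hclosed (b - a) _ (by omega)
        show c (a + (b - a)) = c (a + 0)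
        rw [show a + (b - a) = b by omega, show a + 0 = a from rfl]
        exact hcab.symm
      have hle := cPm_splice_le q hq c hab hbl hcab.symm hmid
      obtain ⟨ℓ', c', h1, h2, h3⟩ := ih (ℓ - (b - a)) (by omega) (splice c a (b - a))
      exact ⟨ℓ', c', h1, by rw [h2, splice_zero c hab hcab.symm], hle.trans h3⟩

end T5

namespace T5
open Finset

variable {n : ℕ} [Nonempty (Fin n)]

noncomputable def mSeq (q : Fin n → Fin n → ℝ) : ℕ → Fin n → ℝ
  | 0 => fun _ => 1
  | h + 1 => fun i =>
      max 1 (Finset.univ.sup' Finset.univ_nonempty (fun k => q i k * mSeq q h k))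

lemma one_le_mSeq (q : Fin n → Fin n → ℝ) (h : ℕ) (i : Fin n) : 1 ≤ mSeq q h i := by
  cases h with
  | zero => exact le_refl _
  | succ h => exact le_max_left _ _

lemma cPm_le_mSeq (q : Fin n → Fin n → ℝ) (hq : ∀ i j, 0 ≤ q i j) :
    ∀ h ℓ, ℓ ≤ h → ∀ c : ℕ → Fin n, cPm q c ℓ ≤ mSeq q h (c 0) := by
  intro h
  induction h with
  | zero =>
    intro ℓ hl c
    have : ℓ = 0 := by omega
    subst this
    rw [cPm_zero]
    exact one_le_mSeq q 0 (c 0)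
  | succ h ih =>
    intro ℓ hl c
    cases ℓ with
    | zero => rw [cPm_zero]; exact one_le_mSeq q (h + 1) (c 0)
    | succ ℓ =>
      rw [cPm_cons]
      have h1 : cPm q (fun k => c (k + 1)) ℓ ≤ mSeq q h (c 1) := ih ℓ (by omega) _
      calc q (c 0) (c 1) * cPm q (fun k => c (k + 1)) ℓ
          ≤ q (c 0) (c 1) * mSeq q h (c 1) := by
            exact mul_le_mul_of_nonneg_left h1 (hq _ _)
        _ ≤ Finset.univ.sup' Finset.univ_nonempty (fun k => q (c 0) k * mSeq q h k) :=
            Finset.le_sup' (fun k => q (c 0) k * mSeq q h k) (Finset.mem_univ (c 1))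
        _ ≤ mSeq q (h + 1) (c 0) := le_max_right _ _

lemma mSeq_attain (q : Fin n → Fin n → ℝ) (hq : ∀ i j, 0 ≤ q i j) :
    ∀ h i, ∃ ℓ c, ℓ ≤ h ∧ c 0 = i ∧ mSeq q h i ≤ cPm q c ℓ := by
  intro h
  induction h with
  | zero =>
    intro i
    exact ⟨0, fun _ => i, le_refl _, rfl, by rw [cPm_zero]; exact le_refl _⟩
  | succ h ih =>
    intro i
    obtain ⟨k0, -, hk0⟩ := Finset.exists_mem_eq_sup' (Finset.univ_nonempty (α := Fin n))
      (fun k => q i k * mSeq q h k)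
    rcases le_or_gt (Finset.univ.sup' Finset.univ_nonempty (fun k => q i k * mSeq q h k)) 1
      with hle | hgt
    · refine ⟨0, fun _ => i, by omega, rfl, ?_⟩
      rw [cPm_zero]
      exact max_le (le_refl _) hle
    · obtain ⟨ℓ', c', hl', hc0', hle'⟩ := ih k0
      refine ⟨ℓ' + 1, fun j => if j = 0 then i else c' (j - 1), by omega, by simp, ?_⟩
      rw [cPm_cons]
      have hshift : (fun k => (fun j => if j = 0 then i else c' (j - 1)) (k + 1)) = c' := by
        funext j; simp
      rw [hshift]
      have hstep : mSeq q (h + 1) i = q i k0 * mSeq q h k0 := by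
        show max 1 _ = _
        rw [max_eq_right hgt.le, hk0]
      rw [hstep]
      have h2 : q i k0 * mSeq q h k0 ≤ q i k0 * cPm q c' ℓ' :=
        mul_le_mul_of_nonneg_left hle' (hq _ _)
      simpa [hc0'] using h2

lemma mProp (q : Fin n → Fin n → ℝ) (hq : ∀ i j, 0 ≤ q i j)
    (hclosed : ∀ ℓ c, 1 ≤ ℓ → c ℓ = c 0 → cPm q c ℓ ≤ 1) (i k : Fin n) :
    q i k * mSeq q n k ≤ mSeq q n i := by
  have hstab : mSeq q (n + 1) i ≤ mSeq q n i := by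
    obtain ⟨ℓ, c, hl, hc0, hle⟩ := mSeq_attain q hq (n + 1) i
    obtain ⟨ℓ', c', hl', hc0', hle'⟩ := shorten q hq hclosed ℓ c
    calc mSeq q (n + 1) i ≤ cPm q c ℓ := hle
      _ ≤ cPm q c' ℓ' := hle'
      _ ≤ mSeq q n (c' 0) := cPm_le_mSeq q hq n ℓ' hl' c'
      _ = mSeq q n i := by rw [hc0', hc0]
  refine le_trans ?_ hstab
  calc q i k * mSeq q n k
      ≤ Finset.univ.sup' Finset.univ_nonempty (fun j => q i j * mSeq q n j) :=
        Finset.le_sup' (fun j => q i j * mSeq q n j) (Finset.mem_univ k)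
    _ ≤ mSeq q (n + 1) i := le_max_right _ _

end T5

set_option maxHeartbeats 1000000 in
/-- Theorem 5 of the paper: if `f(ε) = ε`, `f` is tropical-linearly approximated
at `ε` with tropical Jacobian `J`, and the maximum eigenvalue of `J` is positive (some real
`lam > 0` is an eigenvalue of `J`), then the fixed point `ε` is unstable. -/
theorem stmt_3 {n : ℕ} (f : (Fin n → WithBot ℝ) → (Fin n → WithBot ℝ))
    (J : Fin n → Fin n → WithBot ℝ) (hf : f (botVec n) = botVec n)
    (happrox : ∀ i : Fin n, IsTropLinApprox (fun x => f x i) (J i))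
    (hpos : ∃ lam : ℝ, 0 < lam ∧ IsEigenvalue J (lam : WithBot ℝ)) :
    ¬ TropStable f := by
  classical
  intro hstable
  obtain ⟨lam, hlam, ξ, hξne, hξeig⟩ := hpos
  -- the space is nonempty
  have hξex : ∃ i, ξ i ≠ ⊥ := by
    by_contra h
    push_neg at h
    exact hξne (funext fun i => h i)
  obtain ⟨i0, hi0⟩ := hξex
  haveI hne : Nonempty (Fin n) := ⟨i0⟩
  have hn0 : 0 < n := Fin.pos i0
  set μ : ℝ := Real.exp lam with hμdef
  have hμ0 : 0 < μ := Real.exp_pos lam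
  have hμ1 : 1 < μ := by
    rw [hμdef, show (1:ℝ) = Real.exp 0 by simp]
    exact Real.exp_lt_exp.2 hlam
  set Qm : Fin n → Fin n → ℝ := fun i k => E (J i k) with hQm
  have hQ0 : ∀ i k, 0 ≤ Qm i k := fun i k => T5.E_nonneg _
  -- the set of "good" vertices: on a closed walk of mean ≥ lam
  set Good : Fin n → Prop :=
    fun v => ∃ ℓ c, 1 ≤ ℓ ∧ c 0 = v ∧ c ℓ = v ∧ μ ^ ℓ ≤ T5.cPm Qm c ℓ with hGoodDef
  -- ---- Step 1 : a good vertex exists ----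
  have hstep : ∀ i, ξ i ≠ ⊥ → ∃ j, ξ j ≠ ⊥ ∧ Qm i j * E (ξ j) = μ * E (ξ i) := by
    intro i hi
    obtain ⟨j, -, hj⟩ := Finset.exists_mem_eq_sup (Finset.univ : Finset (Fin n))
      Finset.univ_nonempty (fun j => J i j + ξ j)
    have hj' : J i j + ξ j = (lam : WithBot ℝ) + ξ i := by
      rw [← hj]; exact hξeig i
    have hbot : ((lam : WithBot ℝ) + ξ i) ≠ ⊥ := by
      simp [WithBot.add_eq_bot, hi]
    have hξj : ξ j ≠ ⊥ := by
      intro h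
      rw [h, WithBot.add_bot] at hj'
      exact hbot hj'.symm
    refine ⟨j, hξj, ?_⟩
    have := congrArg E hj'
    rwa [T5.E_add, T5.E_add, T5.E_coe] at this
  have hgood : ∃ v, Good v := by
    choose! σ hσ1 hσ2 using hstep
    set c : ℕ → Fin n := fun k => σ^[k] i0 with hc
    have hcb : ∀ k, ξ (c k) ≠ ⊥ := by
      intro k
      induction k with
      | zero => exact hi0
      | succ k ih =>
        rw [hc]
        show ξ (σ^[k+1] i0) ≠ ⊥
        rw [Function.iterate_succ_apply']
        exact hσ1 _ ih
    have hcs : ∀ k, c (k + 1) = σ (c k) := by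
      intro k; exact Function.iterate_succ_apply' σ k i0
    obtain ⟨a, b, hab, hbn, hcab⟩ := T5.exists_repeat c
    set cc : ℕ → Fin n := fun k => c (a + k) with hcc
    set w : ℕ → ℝ := fun k => E (ξ (cc k)) with hw
    have hwpos : ∀ k, 0 < w k := fun k => T5.E_pos (hcb _)
    have hccs : ∀ k, Qm (cc k) (cc (k + 1)) * w (k + 1) = μ * w k := by
      intro k
      have h1 : cc (k + 1) = σ (cc k) := by
        rw [hcc]
        show c (a + (k+1)) = σ (c (a + k))
        rw [show a + (k+1) = (a+k) + 1 from rfl]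
        exact hcs (a + k)
      show Qm (cc k) (cc (k + 1)) * E (ξ (cc (k + 1))) = μ * E (ξ (cc k))
      rw [h1]
      exact hσ2 (cc k) (hcb _)
    have htel : ∀ ℓ, T5.cPm Qm cc ℓ * w ℓ = μ ^ ℓ * w 0 := by
      intro ℓ
      induction ℓ with
      | zero => rw [T5.cPm_zero]; ring
      | succ ℓ ih =>
        rw [T5.cPm_succ, pow_succ, mul_assoc, hccs ℓ, show
          T5.cPm Qm cc ℓ * (μ * w ℓ) = (T5.cPm Qm cc ℓ * w ℓ) * μ by ring, ih]
        ring
    have hwba : w (b - a) = w 0 := by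
      rw [hw]
      show E (ξ (c (a + (b - a)))) = E (ξ (c (a + 0)))
      rw [show a + (b - a) = b by omega, show a + 0 = a from rfl, hcab]
    have hcp : T5.cPm Qm cc (b - a) = μ ^ (b - a) := by
      have := htel (b - a)
      rw [hwba] at this
      exact mul_right_cancel₀ (ne_of_gt (hwpos 0)) this
    refine ⟨cc 0, b - a, cc, by omega, rfl, ?_, le_of_eq hcp.symm⟩
    show c (a + (b - a)) = c (a + 0)
    rw [show a + (b - a) = b by omega, show a + 0 = a from rfl, hcab]
  obtain ⟨v0, hv0⟩ := hgood
  -- ---- Step 2 : choose a walk for every good vertex; define the potential V ----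
  have hwalk : ∀ v, ∃ p : ℕ × (ℕ → Fin n), Good v →
      1 ≤ p.1 ∧ p.2 0 = v ∧ p.2 p.1 = v ∧ μ ^ p.1 ≤ T5.cPm Qm p.2 p.1 := by
    intro v
    by_cases h : Good v
    · obtain ⟨ℓ, c, h1, h2, h3, h4⟩ := h
      exact ⟨⟨ℓ, c⟩, fun _ => ⟨h1, h2, h3, h4⟩⟩
    · exact ⟨⟨1, fun _ => v⟩, fun hg => absurd hg h⟩
  choose pw hpw using hwalk
  set GoodF : Finset (Fin n) := Finset.univ.filter (fun v => Good v) with hGoodF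
  have hv0F : v0 ∈ GoodF := Finset.mem_filter.2 ⟨Finset.mem_univ v0, hv0⟩
  set ℓv : Fin n → ℕ := fun v => (pw v).1 with hℓv
  set cw : Fin n → ℕ → Fin n := fun v => (pw v).2 with hcw
  set rv : Fin n → ℕ → ℝ := fun v k => T5.cPm Qm (cw v) k / μ ^ k with hrv
  have hrv0 : ∀ v, rv v 0 = 1 := by
    intro v; rw [hrv]; simp [T5.cPm_zero]
  have hrvnn : ∀ v k, 0 ≤ rv v k := fun v k =>
    div_nonneg (T5.cPm_nonneg hQ0 _ _) (pow_pos hμ0 k).le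
  have hrvstep : ∀ v k, rv v k * Qm (cw v k) (cw v (k + 1)) = μ * rv v (k + 1) := by
    intro v k
    rw [hrv]
    simp only
    rw [T5.cPm_succ, pow_succ]
    field_simp
  have hrvlast : ∀ v, Good v → 1 ≤ rv v (ℓv v) := by
    intro v hv
    rw [hrv]
    simp only
    rw [le_div_iff₀ (pow_pos hμ0 _), one_mul]
    exact (hpw v hv).2.2.2
  have hcw0 : ∀ v, Good v → cw v 0 = v := fun v hv => (hpw v hv).2.1
  have hcwl : ∀ v, Good v → cw v (ℓv v) = v := fun v hv => (hpw v hv).2.2.1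
  have hℓv1 : ∀ v, Good v → 1 ≤ ℓv v := fun v hv => (hpw v hv).1
  set V : (Fin n → WithBot ℝ) → ℝ :=
    fun y => ∑ v ∈ GoodF, ∑ k ∈ Finset.range (ℓv v), rv v k * E (y (cw v k)) with hV
  set W : ℝ := ∑ v ∈ GoodF, ∑ k ∈ Finset.range (ℓv v), rv v k with hW
  have hVnn : ∀ y, 0 ≤ V y := by
    intro y
    rw [hV]
    apply Finset.sum_nonneg; intro v _
    apply Finset.sum_nonneg; intro k _
    exact mul_nonneg (hrvnn v k) (T5.E_nonneg _)
  have hVW : ∀ y, V y ≤ W * tnorm y := by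
    intro y
    rw [hV, hW, Finset.sum_mul]
    apply Finset.sum_le_sum; intro v _
    rw [Finset.sum_mul]
    apply Finset.sum_le_sum; intro k _
    exact mul_le_mul_of_nonneg_left (T5.E_le_tnorm y _) (hrvnn v k)
  clear_value V
  clear_value W
  have hW1 : 1 ≤ W := by
    rw [hW]
    have h1 : ∀ v ∈ GoodF, (0:ℝ) ≤ ∑ k ∈ Finset.range (ℓv v), rv v k := by
      intro v _; exact Finset.sum_nonneg fun k _ => hrvnn v k
    have h2 : (1:ℝ) ≤ ∑ k ∈ Finset.range (ℓv v0), rv v0 k := by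
      have := Finset.single_le_sum (f := fun k => rv v0 k)
        (fun k _ => hrvnn v0 k) (Finset.mem_range.2 (hℓv1 v0 hv0))
      simpa [hrv0 v0] using this
    exact h2.trans (Finset.single_le_sum h1 hv0F)
  have hgoodV : ∀ v ∈ GoodF, ∀ y, E (y v) ≤ V y := by
    intro v hv y
    have hGv : Good v := (Finset.mem_filter.1 hv).2
    have h0 : E (y v) = rv v 0 * E (y (cw v 0)) := by
      rw [hrv0 v, hcw0 v hGv, one_mul]
    rw [h0, hV]
    have hterm : rv v 0 * E (y (cw v 0)) ≤ ∑ k ∈ Finset.range (ℓv v), rv v k * E (y (cw v k)) :=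
      Finset.single_le_sum (f := fun k => rv v k * E (y (cw v k)))
        (fun k _ => mul_nonneg (hrvnn v k) (T5.E_nonneg _)) (Finset.mem_range.2 (hℓv1 v hGv))
    refine hterm.trans (Finset.single_le_sum (f := fun v => ∑ k ∈ Finset.range (ℓv v),
      rv v k * E (y (cw v k))) ?_ hv)
    intro u _
    exact Finset.sum_nonneg fun k _ => mul_nonneg (hrvnn u k) (T5.E_nonneg _)
  -- key expansion inequality for V
  have hKV : ∀ y, μ * V y ≤
      ∑ v ∈ GoodF, ∑ k ∈ Finset.range (ℓv v), rv v k * E (tdot (J (cw v k)) y) := by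
    intro y
    rw [hV, Finset.mul_sum]
    apply Finset.sum_le_sum
    intro v hv
    have hGv : Good v := (Finset.mem_filter.1 hv).2
    set c : ℕ → Fin n := cw v with hcv
    set ℓ : ℕ := ℓv v with hℓ
    set h : ℕ → ℝ := fun k => rv v k * E (y (c k)) with hh
    have step1 : ∑ k ∈ Finset.range ℓ, (μ * rv v (k + 1)) * E (y (c (k + 1)))
        ≤ ∑ k ∈ Finset.range ℓ, rv v k * E (tdot (J (c k)) y) := by
      apply Finset.sum_le_sum
      intro k _
      have h1 : Qm (c k) (c (k+1)) * E (y (c (k + 1))) ≤ E (tdot (J (c k)) y) :=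
        T5.le_E_tdot (J (c k)) y (c (k+1))
      calc (μ * rv v (k + 1)) * E (y (c (k + 1)))
          = rv v k * (Qm (c k) (c (k+1)) * E (y (c (k + 1)))) := by
            rw [← hrvstep v k]; ring
        _ ≤ rv v k * E (tdot (J (c k)) y) :=
            mul_le_mul_of_nonneg_left h1 (hrvnn v k)
    have step2 : ∑ k ∈ Finset.range ℓ, h (k + 1)
        = (∑ k ∈ Finset.range ℓ, h k) + h ℓ - h 0 := by
      have e1 := Finset.sum_range_succ' h ℓ
      have e2 := Finset.sum_range_succ h ℓ
      rw [e2] at e1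
      linarith
    have step3 : h 0 ≤ h ℓ := by
      have e0 : c 0 = v := hcw0 v hGv
      have el : c ℓ = v := hcwl v hGv
      have h5 : 1 ≤ rv v ℓ := hrvlast v hGv
      show rv v 0 * E (y (c 0)) ≤ rv v ℓ * E (y (c ℓ))
      calc rv v 0 * E (y (c 0)) = 1 * E (y v) := by rw [e0, hrv0]
        _ ≤ rv v ℓ * E (y v) := mul_le_mul_of_nonneg_right h5 (T5.E_nonneg _)
        _ = rv v ℓ * E (y (c ℓ)) := by rw [el]
    calc μ * ∑ k ∈ Finset.range ℓ, rv v k * E (y (c k))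
        = ∑ k ∈ Finset.range ℓ, (μ * rv v (k + 1)) * E (y (c (k + 1)))
          - μ * (h ℓ - h 0) := by
          rw [show ∑ k ∈ Finset.range ℓ, (μ * rv v (k + 1)) * E (y (c (k + 1)))
            = μ * ∑ k ∈ Finset.range ℓ, h (k + 1) by
              rw [Finset.mul_sum]; apply Finset.sum_congr rfl; intro k _; rw [hh]; ring]
          rw [step2]
          ring
      _ ≤ ∑ k ∈ Finset.range ℓ, (μ * rv v (k + 1)) * E (y (c (k + 1))) := by
          have : 0 ≤ μ * (h ℓ - h 0) := mul_nonneg hμ0.le (by linarith [step3])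
          linarith
      _ ≤ ∑ k ∈ Finset.range ℓ, rv v k * E (tdot (J (c k)) y) := step1
  -- ---- Step 3 : subcritical rate μ₁ for non-good chains, and weights M ----
  set A : ℝ := 1 + ∑ i, ∑ k, Qm i k with hA
  have hA1 : 1 ≤ A := by
    rw [hA]
    have : (0:ℝ) ≤ ∑ i, ∑ k, Qm i k :=
      Finset.sum_nonneg fun i _ => Finset.sum_nonneg fun k _ => hQ0 i k
    linarith
  clear_value A
  have hAQ : ∀ i k, Qm i k ≤ A := by
    intro i k
    rw [hA]
    have h1 : Qm i k ≤ ∑ k', Qm i k' :=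
      Finset.single_le_sum (f := fun k' => Qm i k') (fun k' _ => hQ0 i k') (Finset.mem_univ k)
    have h2 : ∑ k', Qm i k' ≤ ∑ i', ∑ k', Qm i' k' :=
      Finset.single_le_sum (f := fun i' => ∑ k', Qm i' k')
        (fun i' _ => Finset.sum_nonneg fun k' _ => hQ0 i' k') (Finset.mem_univ i)
    linarith
  -- the sup of normalized values of short closed non-good chains
  set cτ : ((Fin (n+1) → Fin n) × Fin n) → ℕ → Fin n :=
    fun τ k => τ.1 ⟨min k n, Nat.lt_succ_of_le (Nat.min_le_right k n)⟩ with hcτ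
  set ℓτ : ((Fin (n+1) → Fin n) × Fin n) → ℕ := fun τ => τ.2.val + 1 with hℓτ
  set val : ((Fin (n+1) → Fin n) × Fin n) → ℝ := fun τ =>
    if (cτ τ (ℓτ τ) = cτ τ 0 ∧ ∀ k < ℓτ τ, ¬ Good (cτ τ k))
    then T5.cPm Qm (cτ τ) (ℓτ τ) / μ ^ (ℓτ τ) else 0 with hval
  set q' : ℝ := max (Finset.univ.sup' Finset.univ_nonempty val) (1/2) with hq'
  clear_value q'
  have hq'0 : (0:ℝ) < q' := by
    rw [hq']
    exact lt_of_lt_of_le (by norm_num) (le_max_right _ _)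
  have hq'1 : q' < 1 := by
    rw [hq']
    apply max_lt _ (by norm_num)
    rw [Finset.sup'_lt_iff]
    intro τ _
    rw [hval]
    simp only
    by_cases hcond : (cτ τ (ℓτ τ) = cτ τ 0 ∧ ∀ k < ℓτ τ, ¬ Good (cτ τ k))
    · rw [if_pos hcond]
      rw [div_lt_one (pow_pos hμ0 _)]
      by_contra hge
      push_neg at hge
      refine hcond.2 0 (by simp only [hℓτ]; omega) ⟨ℓτ τ, cτ τ, by simp only [hℓτ]; omega, rfl, hcond.1, hge⟩
    · rw [if_neg hcond]; norm_num
  set μ1 : ℝ := μ * q' ^ ((n:ℝ)⁻¹) with hμ1def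
  clear_value μ1
  have hrpos : 0 < q' ^ ((n:ℝ)⁻¹) := Real.rpow_pos_of_pos hq'0 _
  have hμ1pos : 0 < μ1 := by rw [hμ1def]; exact mul_pos hμ0 hrpos
  have hrlt1 : q' ^ ((n:ℝ)⁻¹) < 1 :=
    Real.rpow_lt_one hq'0.le hq'1 (by positivity)
  have hμ1lt : μ1 < μ := by
    rw [hμ1def]
    nlinarith
  have hshortQ : ∀ (c : ℕ → Fin n) ℓ, 1 ≤ ℓ → ℓ ≤ n → c ℓ = c 0 →
      (∀ k < ℓ, ¬ Good (c k)) → T5.cPm Qm c ℓ ≤ μ1 ^ ℓ := by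
    intro c ℓ h1 h2 h3 h4
    have hℓn' : ℓ - 1 < n := by omega
    set τ : (Fin (n+1) → Fin n) × Fin n := (fun k : Fin (n+1) => c k.val, ⟨ℓ - 1, hℓn'⟩)
      with hτ
    have hℓeq : ℓτ τ = ℓ := by
      rw [hℓτ, hτ]
      show (ℓ - 1) + 1 = ℓ
      omega
    have hceq : ∀ k, k ≤ n → cτ τ k = c k := by
      intro k hk
      rw [hcτ]
      simp only [hτ]
      congr 1
      omega
    have hprodeq : T5.cPm Qm (cτ τ) (ℓτ τ) = T5.cPm Qm c ℓ := by
      rw [hℓeq, T5.cPm, T5.cPm]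
      apply Finset.prod_congr rfl
      intro k hk
      have hk' : k < ℓ := Finset.mem_range.1 hk
      rw [hceq k (by omega), hceq (k+1) (by omega)]
    have hvτ : val τ = T5.cPm Qm c ℓ / μ ^ ℓ := by
      rw [hval]
      simp only
      rw [if_pos ?_]
      · rw [hprodeq, hℓeq]
      constructor
      · rw [hℓeq, hceq ℓ (by omega), hceq 0 (by omega), h3]
      · intro k hk
        rw [hℓeq] at hk
        rw [hceq k (by omega)]
        exact h4 k hk
    have hle : val τ ≤ q' := le_trans (Finset.le_sup' val (Finset.mem_univ τ))
      (by rw [hq']; exact le_max_left _ _)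
    rw [hvτ, div_le_iff₀ (pow_pos hμ0 ℓ)] at hle
    have h6 : q' ≤ (q' ^ ((n:ℝ)⁻¹)) ^ ℓ := by
      rw [← Real.rpow_natCast (q' ^ ((n:ℝ)⁻¹)) ℓ, ← Real.rpow_mul hq'0.le]
      calc q' = q' ^ (1:ℝ) := (Real.rpow_one q').symm
        _ ≤ q' ^ ((n:ℝ)⁻¹ * (ℓ:ℝ)) := by
            apply Real.rpow_le_rpow_of_exponent_ge hq'0 hq'1.le
            calc (n:ℝ)⁻¹ * (ℓ:ℝ) ≤ (n:ℝ)⁻¹ * (n:ℝ) := by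
                  apply mul_le_mul_of_nonneg_left _ (by positivity)
                  exact_mod_cast h2
              _ = 1 := inv_mul_cancel₀ (by positivity)
    calc T5.cPm Qm c ℓ ≤ q' * μ ^ ℓ := hle
      _ ≤ (q' ^ ((n:ℝ)⁻¹)) ^ ℓ * μ ^ ℓ :=
          mul_le_mul_of_nonneg_right h6 (pow_pos hμ0 ℓ).le
      _ = μ1 ^ ℓ := by rw [hμ1def, mul_pow]; ring
  -- the masked matrix for non-good vertices
  set gq : Fin n → Fin n → ℝ :=
    fun i k => if ¬ Good i ∧ ¬ Good k then Qm i k / μ1 else 0 with hgq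
  have hgq0 : ∀ i k, 0 ≤ gq i k := by
    intro i k
    simp only [hgq]
    split
    · exact div_nonneg (hQ0 i k) hμ1pos.le
    · exact le_refl 0
  have hgclosed : ∀ ℓ c, 1 ≤ ℓ → c ℓ = c 0 → T5.cPm gq c ℓ ≤ 1 := by
    apply T5.closed_le_one gq hgq0
    intro c ℓ h1 h2 h3
    by_cases hz : ∀ k < ℓ, ¬ Good (c k) ∧ ¬ Good (c (k+1))
    · have heq : T5.cPm gq c ℓ = T5.cPm Qm c ℓ / μ1 ^ ℓ := by
        have hfac : ∀ k ∈ Finset.range ℓ, gq (c k) (c (k+1)) = Qm (c k) (c (k+1)) / μ1 := by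
          intro k hk
          simp only [hgq]
          rw [if_pos (hz k (Finset.mem_range.1 hk))]
        rw [T5.cPm, T5.cPm, Finset.prod_congr rfl hfac, Finset.prod_div_distrib,
          Finset.prod_const, Finset.card_range]
      rw [heq, div_le_one (pow_pos hμ1pos ℓ)]
      exact hshortQ c ℓ h1 h2 h3 (fun k hk => (hz k hk).1)
    · obtain ⟨k, hk⟩ := not_forall.1 hz
      rw [Classical.not_imp] at hk
      have hfz : gq (c k) (c (k+1)) = 0 := by
        simp only [hgq]
        rw [if_neg hk.2]
      rw [T5.cPm, Finset.prod_eq_zero (Finset.mem_range.2 hk.1) hfz]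
      norm_num
  set M : Fin n → ℝ := T5.mSeq gq n with hM
  have hM1 : ∀ i, 1 ≤ M i := fun i => T5.one_le_mSeq gq n i
  have hM2 : ∀ i k, ¬ Good i → ¬ Good k → Qm i k * M k ≤ μ1 * M i := by
    intro i k hi hk
    have h1 : gq i k * M k ≤ M i := T5.mProp gq hgq0 hgclosed i k
    have h2 : gq i k = Qm i k / μ1 := by simp only [hgq]; rw [if_pos ⟨hi, hk⟩]
    rw [h2] at h1
    have hμ1ne : μ1 ≠ 0 := ne_of_gt hμ1pos
    calc Qm i k * M k = μ1 * (Qm i k / μ1 * M k) := by field_simp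
      _ ≤ μ1 * M i := mul_le_mul_of_nonneg_left h1 hμ1pos.le
  clear_value M
  set mbar : ℝ := ∑ i, M i with hmbar
  clear_value mbar
  have hmb : ∀ i, M i ≤ mbar := by
    intro i
    rw [hmbar]
    exact Finset.single_le_sum (f := fun i => M i)
      (fun j _ => le_trans zero_le_one (hM1 j)) (Finset.mem_univ i)
  have hmb1 : (1:ℝ) ≤ mbar := le_trans (hM1 (Classical.arbitrary _)) (hmb _)
  -- ---- Step 4 : constants ----
  have hgap : 0 < μ - μ1 := sub_pos.2 hμ1lt
  obtain ⟨C, hC⟩ : ∃ x : ℝ, x = 2 * (A + 1) / (μ - μ1) := ⟨_, rfl⟩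
  have hCpos : 0 < C := by
    rw [hC]
    apply div_pos _ hgap
    linarith only [hA1]
  have hCgap : C * (μ - μ1) = 2 * (A + 1) := by
    rw [hC, div_mul_cancel₀]
    exact ne_of_gt hgap
  obtain ⟨K, hK⟩ : ∃ x : ℝ, x = 1 + mbar * C := ⟨_, rfl⟩
  have hmbC : 0 < mbar * C := mul_pos (lt_of_lt_of_le one_pos hmb1) hCpos
  have hKpos : 0 < K := by rw [hK]; linarith only [hmbC]
  have hK1 : 1 ≤ K := by rw [hK]; linarith only [hmbC]
  have hWpos : 0 < W := lt_of_lt_of_le one_pos hW1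
  have hden1 : 0 < K + C * W * K := by
    have h1 := mul_pos (mul_pos hCpos hWpos) hKpos
    linarith only [h1, hKpos]
  have hden2 : 0 < 2 * (W * K) := by
    have h1 := mul_pos hWpos hKpos
    linarith only [h1]
  obtain ⟨θ, hθ⟩ : ∃ x : ℝ, x = min (1 / (K + C * W * K)) ((μ - 1) / (2 * (W * K))) := ⟨_, rfl⟩
  have hθpos : 0 < θ := by
    rw [hθ]
    refine lt_min (one_div_pos.2 hden1) (div_pos ?_ hden2)
    linarith only [hμ1]
  have hθ1 : θ * (K + C * W * K) ≤ 1 := by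
    have h1 : θ ≤ 1 / (K + C * W * K) := by rw [hθ]; exact min_le_left _ _
    rw [le_div_iff₀ hden1] at h1
    linarith only [h1]
  have hθ2 : θ * (W * K) ≤ (μ - 1) / 2 := by
    have h1 : θ ≤ (μ - 1) / (2 * (W * K)) := by rw [hθ]; exact min_le_right _ _
    rw [le_div_iff₀ hden2] at h1
    nlinarith only [h1]
  obtain ⟨μ', hμ'⟩ : ∃ x : ℝ, x = μ - θ * (W * K) := ⟨_, rfl⟩
  have hμ'1 : 1 < μ' := by rw [hμ']; linarith only [hθ2, hμ1]
  have hμ'pos : 0 < μ' := by linarith only [hμ'1]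
  have hmain : A + μ1 * C + θ * K + C * (θ * (W * K)) ≤ C * μ := by
    have h1 : θ * K + C * (θ * (W * K)) ≤ 1 := by
      have h2 : θ * K + C * (θ * (W * K)) = θ * (K + C * W * K) := by ring
      rw [h2]
      exact hθ1
    nlinarith only [h1, hCgap, hA1]
  -- approximation radii at level θ
  choose δf hδf using fun i => happrox i θ hθpos
  set δθ : ℝ := Finset.univ.inf' Finset.univ_nonempty δf with hδθ
  clear_value δθ
  have hδθpos : 0 < δθ := by
    rw [hδθ, Finset.lt_inf'_iff]
    exact fun i _ => (hδf i).1
  have hδθle : ∀ i, δθ ≤ δf i := by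
    intro i
    rw [hδθ]
    exact Finset.inf'_le δf (Finset.mem_univ i)
  -- instantiate stability at level δθ
  obtain ⟨δs, hδs, hstab⟩ := hstable δθ hδθpos
  obtain ⟨cinit, hcinit⟩ : ∃ x : ℝ, x = min δs δθ / 2 := ⟨_, rfl⟩
  have hminpos : 0 < min δs δθ := lt_min hδs hδθpos
  have hcinit0 : 0 < cinit := by rw [hcinit]; linarith
  have hcinitδs : cinit < δs := by
    rw [hcinit]
    have h1 := min_le_left δs δθ
    linarith only [h1, hminpos]
  -- initial point
  set x0 : Fin n → WithBot ℝ :=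
    fun i => if Good i then ((Real.log cinit : ℝ) : WithBot ℝ) else ⊥ with hx0
  have hx0norm : tnorm x0 ≤ cinit := by
    have hsup : Finset.univ.sup x0 ≤ ((Real.log cinit : ℝ) : WithBot ℝ) := by
      apply Finset.sup_le
      intro i _
      simp only [hx0]
      by_cases h : Good i
      · rw [if_pos h]
      · rw [if_neg h]; exact bot_le
    calc tnorm x0 ≤ E ((Real.log cinit : ℝ) : WithBot ℝ) := T5.E_mono hsup
      _ = cinit := by rw [T5.E_coe, Real.exp_log hcinit0]
  have hx0lt : tnorm x0 < δs := lt_of_le_of_lt hx0norm hcinitδs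
  have hEx0 : ∀ v, Good v → E (x0 v) = cinit := by
    intro v hv
    simp only [hx0]
    rw [if_pos hv, T5.E_coe, Real.exp_log hcinit0]
  have hEx0z : ∀ v, ¬ Good v → E (x0 v) = 0 := by
    intro v hv
    simp only [hx0]
    rw [if_neg hv, T5.E_bot]
  -- the orbit
  set y : ℕ → Fin n → WithBot ℝ := fun t => f^[t] x0 with hy
  have hyst : ∀ t, tnorm (y t) < δθ := fun t => hstab x0 hx0lt t
  set P : ℕ → ℝ := fun t => Finset.univ.sup' Finset.univ_nonempty
    (fun i => if Good i then 0 else E (y t i) / M i) with hP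
  clear_value P
  have hMpos : ∀ i, (0:ℝ) < M i := fun i => lt_of_lt_of_le one_pos (hM1 i)
  have hPnn : ∀ t, 0 ≤ P t := by
    intro t
    simp only [hP]
    refine le_trans ?_ (Finset.le_sup'
      (fun i => if Good i then 0 else E (y t i) / M i)
      (Finset.mem_univ (Classical.arbitrary (Fin n))))
    by_cases h : Good (Classical.arbitrary (Fin n))
    · rw [if_pos h]
    · rw [if_neg h]; exact div_nonneg (T5.E_nonneg _) (hMpos _).le
  have hzone_le : ∀ t i, ¬ Good i → E (y t i) ≤ M i * P t := by
    intro t i h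
    have h1 : E (y t i) / M i ≤ P t := by
      simp only [hP]
      refine le_trans (le_of_eq ?_) (Finset.le_sup'
        (fun i => if Good i then 0 else E (y t i) / M i) (Finset.mem_univ i))
      rw [if_neg h]
    have hMne : M i ≠ 0 := ne_of_gt (hMpos i)
    have h2 : M i * (E (y t i) / M i) = E (y t i) := by field_simp
    calc E (y t i) = M i * (E (y t i) / M i) := h2.symm
      _ ≤ M i * P t := mul_le_mul_of_nonneg_left h1 (hMpos i).le
  have hV0 : cinit ≤ V x0 := by
    have := hgoodV v0 hv0F x0
    rwa [hEx0 v0 hv0] at this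
  -- ---- Step 5 : the main induction ----
  have INV : ∀ t, P t ≤ C * V (y t) ∧ cinit * μ' ^ t ≤ V (y t) := by
    intro t
    induction t with
    | zero =>
      have hy0 : y 0 = x0 := rfl
      constructor
      · simp only [hP]
        apply Finset.sup'_le
        intro i _
        have hCV : 0 ≤ C * V (y 0) := by
          apply mul_nonneg hCpos.le (hVnn _)
        by_cases h : Good i
        · rw [if_pos h]; exact hCV
        · rw [if_neg h, hy0, hEx0z i h]
          rw [zero_div]
          exact hCV
      · rw [hy0, pow_zero, mul_one]
        exact hV0
    | succ t ih =>
      obtain ⟨ihP, ihV⟩ := ih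
      have hVpos : 0 < V (y t) :=
        lt_of_lt_of_le (mul_pos hcinit0 (pow_pos hμ'pos t)) ihV
      have hu_le : ∀ i, E (y t i) ≤ K * V (y t) := by
        intro i
        by_cases h : Good i
        · calc E (y t i) ≤ V (y t) := hgoodV i (Finset.mem_filter.2 ⟨Finset.mem_univ i, h⟩) _
            _ ≤ K * V (y t) := le_mul_of_one_le_left hVpos.le hK1
        · calc E (y t i) ≤ M i * P t := hzone_le t i h
            _ ≤ mbar * (C * V (y t)) := by
                apply mul_le_mul (hmb i) ihP (hPnn t) (by linarith [hmb1])
            _ ≤ K * V (y t) := by rw [hK]; nlinarith only [hVpos]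
      have hs_le : tnorm (y t) ≤ K * V (y t) := by
        obtain ⟨i, hi⟩ := T5.exists_tnorm_eq (y t)
        rw [hi]; exact hu_le i
      have hs_pos : 0 < tnorm (y t) := by
        by_contra h
        push_neg at h
        have h2 := hVW (y t)
        have h3 : W * tnorm (y t) ≤ 0 := mul_nonpos_of_nonneg_of_nonpos hWpos.le h
        linarith only [h2, h3, hVpos]
      have happt : ∀ i, |E (y (t+1) i) - E (tdot (J i) (y t))| ≤ θ * tnorm (y t) := by
        intro i
        have h2 := (hδf i).2 (y t) hs_pos (lt_of_lt_of_le (hyst t) (hδθle i))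
        have h3 : y (t + 1) = f (y t) := Function.iterate_succ_apply' f t x0
        rw [h3]
        exact h2
      have hlow : ∀ i, E (tdot (J i) (y t)) - θ * tnorm (y t) ≤ E (y (t+1) i) := by
        intro i
        have h5 := abs_le.1 (happt i)
        linarith only [h5.1]
      have hupp : ∀ i, E (y (t+1) i) ≤ E (tdot (J i) (y t)) + θ * tnorm (y t) := by
        intro i
        have h5 := abs_le.1 (happt i)
        linarith only [h5.2]
      -- V grows
      have hVstep : μ' * V (y t) ≤ V (y (t+1)) := by
        have h1 : ∑ v ∈ GoodF, ∑ k ∈ Finset.range (ℓv v),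
            rv v k * (E (tdot (J (cw v k)) (y t)) - θ * tnorm (y t)) ≤ V (y (t+1)) := by
          rw [hV]
          apply Finset.sum_le_sum
          intro v _
          apply Finset.sum_le_sum
          intro k _
          exact mul_le_mul_of_nonneg_left (hlow (cw v k)) (hrvnn v k)
        have h2 : ∑ v ∈ GoodF, ∑ k ∈ Finset.range (ℓv v),
            rv v k * (E (tdot (J (cw v k)) (y t)) - θ * tnorm (y t))
            = (∑ v ∈ GoodF, ∑ k ∈ Finset.range (ℓv v),
                rv v k * E (tdot (J (cw v k)) (y t))) - θ * tnorm (y t) * W := by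
          rw [hW, Finset.mul_sum, ← Finset.sum_sub_distrib]
          apply Finset.sum_congr rfl
          intro v _
          rw [Finset.mul_sum, ← Finset.sum_sub_distrib]
          apply Finset.sum_congr rfl
          intro k _
          ring
        have h3 := hKV (y t)
        have h4 : θ * tnorm (y t) * W ≤ θ * (K * V (y t)) * W := by
          apply mul_le_mul_of_nonneg_right _ (by linarith)
          exact mul_le_mul_of_nonneg_left hs_le hθpos.le
        rw [h2] at h1
        rw [hμ']
        nlinarith only [h1, h3, h4]
      constructor
      · -- P step
        have hPstep : P (t+1) ≤ (A + μ1 * C + θ * K) * V (y t) := by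
          have hRnn : 0 ≤ (A + μ1 * C + θ * K) * V (y t) := by
            apply mul_nonneg _ hVpos.le
            have ha : 0 ≤ μ1 * C := mul_nonneg hμ1pos.le hCpos.le
            have hb : 0 ≤ θ * K := mul_nonneg hθpos.le hKpos.le
            linarith only [ha, hb, hA1]
          simp only [hP]
          apply Finset.sup'_le
          intro i _
          by_cases h : Good i
          · rw [if_pos h]; exact hRnn
          · rw [if_neg h]
            obtain ⟨k0, hk0⟩ := T5.exists_E_tdot (J i) (y t)
            have hEt : E (tdot (J i) (y t)) ≤ max (A * V (y t)) (μ1 * (M i * P t)) := by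
              rw [hk0]
              by_cases hk : Good k0
              · refine le_trans ?_ (le_max_left _ _)
                calc E (J i k0) * E (y t k0) ≤ A * E (y t k0) :=
                      mul_le_mul_of_nonneg_right (hAQ i k0) (T5.E_nonneg _)
                  _ ≤ A * V (y t) := by
                      apply mul_le_mul_of_nonneg_left
                        (hgoodV k0 (Finset.mem_filter.2 ⟨Finset.mem_univ k0, hk⟩) _)
                        (by linarith [hA1])
              · refine le_trans ?_ (le_max_right _ _)
                calc E (J i k0) * E (y t k0) ≤ Qm i k0 * (M k0 * P t) :=
                      mul_le_mul_of_nonneg_left (hzone_le t k0 hk) (hQ0 i k0)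
                  _ = (Qm i k0 * M k0) * P t := by ring
                  _ ≤ (μ1 * M i) * P t :=
                      mul_le_mul_of_nonneg_right (hM2 i k0 h hk) (hPnn t)
                  _ = μ1 * (M i * P t) := by ring
            have hMi := hM1 i
            have hMip := hMpos i
            have hdle : E (y (t+1) i) / M i
                ≤ (max (A * V (y t)) (μ1 * (M i * P t)) + θ * tnorm (y t)) / M i := by
              apply (div_le_div_iff_of_pos_right hMip).2
              refine le_trans (hupp i) ?_
              linarith only [hEt]
            refine hdle.trans ?_
            rw [add_div]
            have hpart1 : max (A * V (y t)) (μ1 * (M i * P t)) / M i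
                ≤ A * V (y t) + μ1 * P t := by
              rcases max_cases (A * V (y t)) (μ1 * (M i * P t)) with ⟨hmax, -⟩ | ⟨hmax, -⟩
              · rw [hmax]
                have h5 : A * V (y t) / M i ≤ A * V (y t) := by
                  apply div_le_self _ hMi
                  have h9 : 0 ≤ A := by linarith only [hA1]
                  exact mul_nonneg h9 hVpos.le
                have h6 : 0 ≤ μ1 * P t := mul_nonneg hμ1pos.le (hPnn t)
                linarith only [h5, h6]
              · rw [hmax]
                have h5 : μ1 * (M i * P t) / M i = μ1 * P t := by field_simp
                rw [h5]
                have h6 : 0 ≤ A * V (y t) := mul_nonneg (by linarith only [hA1]) hVpos.le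
                linarith only [h6]
            have hpart2 : θ * tnorm (y t) / M i ≤ θ * (K * V (y t)) := by
              have h5 : θ * tnorm (y t) / M i ≤ θ * tnorm (y t) := by
                apply div_le_self (mul_nonneg hθpos.le (T5.tnorm_nonneg _)) hMi
              have h6 : θ * tnorm (y t) ≤ θ * (K * V (y t)) :=
                mul_le_mul_of_nonneg_left hs_le hθpos.le
              linarith only [h5, h6]
            have hfin : A * V (y t) + μ1 * P t + θ * (K * V (y t))
                ≤ (A + μ1 * C + θ * K) * V (y t) := by
              have h7 : μ1 * P t ≤ μ1 * (C * V (y t)) :=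
                mul_le_mul_of_nonneg_left ihP hμ1pos.le
              nlinarith only [h7]
            linarith only [hpart1, hpart2, hfin]
        have hstep2 : (A + μ1 * C + θ * K) * V (y t) ≤ C * V (y (t+1)) := by
          calc (A + μ1 * C + θ * K) * V (y t)
              ≤ (C * μ - C * (θ * (W * K))) * V (y t) := by
                apply mul_le_mul_of_nonneg_right _ hVpos.le
                linarith only [hmain]
            _ = C * (μ' * V (y t)) := by rw [hμ']; ring
            _ ≤ C * V (y (t+1)) := mul_le_mul_of_nonneg_left hVstep hCpos.le
        exact hPstep.trans hstep2
      · calc cinit * μ' ^ (t+1) = μ' * (cinit * μ' ^ t) := by ring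
          _ ≤ μ' * V (y t) := mul_le_mul_of_nonneg_left ihV hμ'pos.le
          _ ≤ V (y (t+1)) := hVstep
  -- ---- Step 6 : contradiction ----
  obtain ⟨t, ht⟩ := pow_unbounded_of_one_lt (W * δθ / cinit) hμ'1
  have h1 : cinit * μ' ^ t ≤ V (y t) := (INV t).2
  have h2 : V (y t) ≤ W * tnorm (y t) := hVW (y t)
  have h3 : tnorm (y t) < δθ := hyst t
  rw [div_lt_iff₀ hcinit0] at ht
  have h4 := mul_lt_mul_of_pos_left h3 hWpos
  nlinarith only [ht, h1, h2, h4]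
end

section
/- Let A ∈ ℝ_max^{n×n} with n ≥ 1, and let λ* ∈ ℝ_max be the maximum average weight over all circuits in the weighted digraph G(A) (with λ* = -∞ if G(A) has no circuit; the set of relevant average weights is finite since only circuits of length at most n need be considered). Then λ* is an eigenvalue of A, and every eigenvalue μ ∈ ℝ_max of A satisfies μ ≤ λ*; that is, the maximum eigenvalue of A equals the maximum average circuit weight of G(A). -/
open Filter Topology

/-- `lam` is the maximum average weight over all circuits of `G(A)`
(equal to `-∞` when `G(A)` has no circuit).  The condition "average weight ≤ lam" for a
circuit of length `ℓ ≥ 1` is expressed as "weight ≤ ℓ • lam". -/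
def IsMaxCycleMean {n : ℕ} (A : Fin n → Fin n → WithBot ℝ) (lam : WithBot ℝ) : Prop :=
  (∀ (ℓ : ℕ) (c : ℕ → Fin n), IsCircuit A ℓ c → circuitWeight A ℓ c ≤ ℓ • lam) ∧
  ((∃ (ℓ : ℕ) (c : ℕ → Fin n), IsCircuit A ℓ c ∧ circuitWeight A ℓ c = ℓ • lam) ∨
    (lam = ⊥ ∧ ∀ (ℓ : ℕ) (c : ℕ → Fin n), ¬ IsCircuit A ℓ c))

namespace TropAux

lemma add_max (c x y : WithBot ℝ) : c + (x ⊔ y) = (c + x) ⊔ (c + y) := by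
  rcases le_total x y with h | h
  · rw [sup_eq_right.2 h, sup_eq_right.2 (add_le_add_right h c)]
  · rw [sup_eq_left.2 h, sup_eq_left.2 (add_le_add_right h c)]

lemma add_sup {β : Type*} (c : WithBot ℝ) (s : Finset β) (f : β → WithBot ℝ) :
    c + s.sup f = s.sup fun b => c + f b := by
  classical
  induction s using Finset.induction_on with
  | empty => simp
  | insert a s ha ih => rw [Finset.sup_insert, Finset.sup_insert, add_max, ih]

lemma sup_add {β : Type*} (c : WithBot ℝ) (s : Finset β) (f : β → WithBot ℝ) :
    s.sup f + c = s.sup fun b => f b + c := by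
  rw [add_comm, add_sup]; simp_rw [add_comm]

lemma tmul_assoc {n : ℕ} (A B C : Fin n → Fin n → WithBot ℝ) :
    tmul (tmul A B) C = tmul A (tmul B C) := by
  funext i j
  show (Finset.univ.sup fun k => (Finset.univ.sup fun l => A i l + B l k) + C k j)
      = Finset.univ.sup fun l => A i l + Finset.univ.sup fun k => B l k + C k j
  simp_rw [sup_add, add_sup]
  rw [Finset.sup_comm]
  simp_rw [add_assoc]

lemma tpow_zero_tmul {n : ℕ} (A : Fin n → Fin n → WithBot ℝ) : tmul (tpow A 0) A = A := by
  funext i j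
  show (Finset.univ.sup fun k => (if i = k then (0:WithBot ℝ) else ⊥) + A k j) = A i j
  apply le_antisymm
  · apply Finset.sup_le
    intro k _
    by_cases h : i = k
    · subst h; simp
    · simp [h]
  · have := Finset.le_sup (f := fun k => (if i = k then (0:WithBot ℝ) else ⊥) + A k j)
      (Finset.mem_univ i)
    simpa using this

lemma tmul_tpow_zero {n : ℕ} (A : Fin n → Fin n → WithBot ℝ) : tmul A (tpow A 0) = A := by
  funext i j
  show (Finset.univ.sup fun k => A i k + (if k = j then (0:WithBot ℝ) else ⊥)) = A i j
  apply le_antisymm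
  · apply Finset.sup_le
    intro k _
    by_cases h : k = j
    · subst h; simp
    · simp [h]
  · have := Finset.le_sup (f := fun k => A i k + (if k = j then (0:WithBot ℝ) else ⊥))
      (Finset.mem_univ j)
    simpa using this

lemma tpow_succ' {n : ℕ} (A : Fin n → Fin n → WithBot ℝ) (k : ℕ) :
    tpow A (k + 1) = tmul A (tpow A k) := by
  induction k with
  | zero => show tmul (tpow A 0) A = tmul A (tpow A 0); rw [tpow_zero_tmul, tmul_tpow_zero]
  | succ k ih =>
    show tmul (tpow A (k+1)) A = tmul A (tpow A (k+1))
    calc tmul (tpow A (k+1)) A = tmul (tmul A (tpow A k)) A := by rw [ih]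
      _ = tmul A (tmul (tpow A k) A) := tmul_assoc ..
      _ = tmul A (tpow A (k+1)) := rfl

lemma tpow_superadd {n : ℕ} (A : Fin n → Fin n → WithBot ℝ) (p q : ℕ) (j k i : Fin n) :
    tpow A p j k + tpow A q k i ≤ tpow A (p + q) j i := by
  induction q generalizing i with
  | zero =>
    show tpow A p j k + (if k = i then (0:WithBot ℝ) else ⊥) ≤ tpow A p j i
    by_cases h : k = i
    · subst h; simp
    · simp [h]
  | succ q ih =>
    by_cases hb : tpow A (q+1) k i = ⊥
    · rw [hb]; simp
    · obtain ⟨k', -, hk'⟩ := Finset.exists_mem_eq_sup Finset.univ ⟨k, Finset.mem_univ k⟩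
        (fun k' => tpow A q k k' + A k' i)
      have : tpow A (q+1) k i = tpow A q k k' + A k' i := hk'
      rw [this, ← add_assoc]
      calc tpow A p j k + tpow A q k k' + A k' i ≤ tpow A (p+q) j k' + A k' i :=
            add_le_add_left (ih k') _
        _ ≤ tpow A (p + (q+1)) j i := by
            have : p + (q+1) = (p+q)+1 := rfl
            rw [this]
            exact Finset.le_sup (f := fun k'' => tpow A (p+q) j k'' + A k'' i)
              (Finset.mem_univ k')

lemma walk_le {n : ℕ} (A : Fin n → Fin n → WithBot ℝ) (m : ℕ) (c : ℕ → Fin n) :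
    circuitWeight A m c ≤ tpow A m (c 0) (c m) := by
  induction m with
  | zero => simp [circuitWeight, tpow]
  | succ m ih =>
    rw [circuitWeight, Finset.sum_range_succ]
    calc (∑ k ∈ Finset.range m, A (c k) (c (k+1))) + A (c m) (c (m+1))
        ≤ tpow A m (c 0) (c m) + A (c m) (c (m+1)) := add_le_add_left ih _
      _ ≤ tpow A (m+1) (c 0) (c (m+1)) :=
          Finset.le_sup (f := fun k => tpow A m (c 0) k + A k (c (m+1))) (Finset.mem_univ (c m))

lemma exists_walk {n : ℕ} (A : Fin n → Fin n → WithBot ℝ) :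
    ∀ (m : ℕ) (j i : Fin n), tpow A m j i ≠ ⊥ →
    ∃ c : ℕ → Fin n, c 0 = j ∧ c m = i ∧ circuitWeight A m c = tpow A m j i := by
  intro m
  induction m with
  | zero =>
    intro j i h
    have hji : j = i := by
      by_contra hne
      exact h (by simp [tpow, hne])
    subst hji
    exact ⟨fun _ => j, rfl, rfl, by simp [circuitWeight, tpow]⟩
  | succ m ih =>
    intro j i h
    obtain ⟨k, -, hk⟩ := Finset.exists_mem_eq_sup Finset.univ ⟨j, Finset.mem_univ j⟩
      (fun k => tpow A m j k + A k i)
    have heq : tpow A (m+1) j i = tpow A m j k + A k i := hk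
    have h1 : tpow A m j k ≠ ⊥ := by
      intro hb
      rw [heq, hb] at h
      simp at h
    obtain ⟨c, hc0, hcm, hw⟩ := ih j k h1
    refine ⟨fun t => if t ≤ m then c t else i, by simpa using hc0, by simp, ?_⟩
    rw [circuitWeight, Finset.sum_range_succ]
    have hlast : (if m ≤ m then c m else i) = k := by simpa using hcm
    have hl2 : (if m + 1 ≤ m then c (m+1) else i) = i := by simp
    rw [hlast, hl2]
    have hsame : ∀ t ∈ Finset.range m,
        A (if t ≤ m then c t else i) (if t + 1 ≤ m then c (t+1) else i)
          = A (c t) (c (t+1)) := by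
      intro t ht
      have ht' := Finset.mem_range.1 ht
      rw [if_pos (by omega), if_pos (by omega)]
    rw [Finset.sum_congr rfl hsame]
    have hw' : (∑ x ∈ Finset.range m, A (c x) (c (x+1))) = tpow A m j k := hw
    rw [hw', heq]

lemma sum_term_ne_bot {β : Type*} {s : Finset β} {f : β → WithBot ℝ}
    (h : ∑ b ∈ s, f b ≠ ⊥) {b : β} (hb : b ∈ s) : f b ≠ ⊥ := by
  intro hfb
  exact h (WithBot.sum_eq_bot_iff.2 ⟨b, hb, hfb⟩)

lemma exists_repeat {n : ℕ} (hn : 1 ≤ n) (c : ℕ → Fin n) :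
    ∃ p q, p < q ∧ q ≤ n ∧ c p = c q := by
  obtain ⟨a, b, hab, hfab⟩ := Fintype.exists_ne_map_eq_of_card_lt
    (fun t : Fin (n+1) => c t) (by simp)
  rcases hab.lt_or_gt with hlt | hlt
  · exact ⟨a, b, hlt, Nat.lt_succ_iff.1 b.isLt, hfab⟩
  · exact ⟨b, a, hlt, Nat.lt_succ_iff.1 a.isLt, hfab.symm⟩

lemma nsmul_bot {ℓ : ℕ} (hℓ : 1 ≤ ℓ) : ℓ • (⊥ : WithBot ℝ) = ⊥ := by
  obtain ⟨k, rfl⟩ := Nat.exists_eq_add_of_le hℓ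
  rw [add_comm, succ_nsmul]
  simp


lemma sup_shift (n : ℕ) (g : ℕ → WithBot ℝ) :
    (Finset.Icc 2 (n+1)).sup g = (Finset.Icc 1 n).sup fun p => g (p+1) := by
  apply le_antisymm
  · apply Finset.sup_le
    intro q hq
    obtain ⟨h1, h2⟩ := Finset.mem_Icc.1 hq
    rw [show q = (q-1) + 1 by omega]
    exact Finset.le_sup (f := fun p => g (p+1)) (Finset.mem_Icc.2 ⟨by omega, by omega⟩)
  · apply Finset.sup_le
    intro p hp
    obtain ⟨h1, h2⟩ := Finset.mem_Icc.1 hp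
    exact Finset.le_sup (f := g) (Finset.mem_Icc.2 ⟨by omega, by omega⟩)

lemma reduce {n : ℕ} (hn : 1 ≤ n) (B : Fin n → Fin n → WithBot ℝ)
    (hcirc : ∀ ℓ c, IsCircuit B ℓ c → circuitWeight B ℓ c ≤ 0)
    (m : ℕ) (hm : n < m) (j i : Fin n) :
    ∃ m', m - n ≤ m' ∧ m' < m ∧ tpow B m j i ≤ tpow B m' j i := by
  by_cases hb : tpow B m j i = ⊥
  · exact ⟨m - 1, by omega, by omega, hb ▸ bot_le⟩
  obtain ⟨c, hc0, hcm, hw⟩ := exists_walk B m j i hb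
  obtain ⟨p, q, hpq, hqn, hcpq⟩ := exists_repeat hn c
  set f : ℕ → WithBot ℝ := fun t => B (c t) (c (t+1)) with hf
  have hwne : (∑ t ∈ Finset.range m, f t) ≠ ⊥ := by
    have : circuitWeight B m c ≠ ⊥ := hw ▸ hb
    exact this
  set d := q - p with hd
  have hd1 : 1 ≤ d := by omega
  have hq : q = p + d := by omega
  -- the circuit segment
  have hseg : IsCircuit B d (fun k => c (p + k)) := by
    refine ⟨hd1, ?_, ?_⟩
    · show c (p + d) = c (p + 0)
      rw [← hq, Nat.add_zero]; exact hcpq.symm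
    intro k hk
    have : p + k < m := by omega
    have := sum_term_ne_bot hwne (Finset.mem_range.2 this)
    exact this
  have hsegw : circuitWeight B d (fun k => c (p + k)) = ∑ t ∈ Finset.Ico p q, f t := by
    rw [circuitWeight, Finset.sum_Ico_eq_sum_range]
    have : q - p = d := rfl
    rw [this]
    exact Finset.sum_congr rfl fun k _ => by rw [hf]; ring_nf
  have hseg_le : (∑ t ∈ Finset.Ico p q, f t) ≤ 0 := by
    have := hcirc d (fun k => c (p + k)) hseg
    rw [hsegw] at this
    simpa using this
  -- the shortened walk
  set m' := m - d with hm'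
  have hpm' : p < m' := by omega
  set c' : ℕ → Fin n := fun t => if t < p then c t else c (t + d) with hc'
  have hc'0 : c' 0 = j := by
    by_cases hp : 0 < p
    · simp only [hc', if_pos hp]; exact hc0
    · have hp0 : p = 0 := by omega
      simp only [hc', if_neg (by omega : ¬ (0:ℕ) < p)]
      rw [show 0 + d = q by omega, ← hcpq, hp0]; exact hc0
  have hc'm : c' m' = i := by
    simp only [hc', if_neg (by omega : ¬ m' < p)]
    rw [show m' + d = m by omega, hcm]
  have hc'w : circuitWeight B m' c'
      = (∑ t ∈ Finset.range p, f t) + ∑ t ∈ Finset.Ico q m, f t := by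
    rw [circuitWeight, Finset.range_eq_Ico,
      ← Finset.sum_Ico_consecutive _ (by omega : 0 ≤ p) (le_of_lt hpm')]
    congr 1
    · rw [← Finset.range_eq_Ico]
      refine Finset.sum_congr rfl fun t ht => ?_
      have ht' := Finset.mem_range.1 ht
      have h1 : c' t = c t := if_pos ht'
      have h2 : c' (t+1) = c (t+1) := by
        by_cases h3 : t + 1 < p
        · exact if_pos h3
        · have h4 : t + 1 = p := by omega
          simp only [hc', if_neg (by omega : ¬ t + 1 < p)]
          rw [h4, ← hq, hcpq.symm]
      rw [h1, h2]
    · rw [Finset.sum_Ico_eq_sum_range, Finset.sum_Ico_eq_sum_range]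
      rw [show m - q = m' - p by omega]
      refine Finset.sum_congr rfl fun t ht => ?_
      have h1 : c' (p + t) = c (p + t + d) := if_neg (by omega)
      have h2 : c' (p + t + 1) = c (p + t + 1 + d) := if_neg (by omega)
      rw [h1, h2, hf]
      congr 2 <;> omega
  refine ⟨m', by omega, by omega, ?_⟩
  have hsplit : (∑ t ∈ Finset.range m, f t)
      = (∑ t ∈ Finset.Ico p q, f t) + circuitWeight B m' c' := by
    rw [hc'w, Finset.range_eq_Ico,
      ← Finset.sum_Ico_consecutive _ (by omega : 0 ≤ p) (by omega : p ≤ m),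
      ← Finset.sum_Ico_consecutive _ (by omega : p ≤ q) (by omega : q ≤ m),
      ← Finset.range_eq_Ico]
    abel
  have h1 : tpow B m j i = (∑ t ∈ Finset.range m, f t) := hw.symm
  rw [h1, hsplit]
  calc (∑ t ∈ Finset.Ico p q, f t) + circuitWeight B m' c'
      ≤ 0 + circuitWeight B m' c' := add_le_add_left hseg_le _
    _ = circuitWeight B m' c' := zero_add _
    _ ≤ tpow B m' (c' 0) (c' m') := walk_le B m' c'
    _ = tpow B m' j i := by rw [hc'0, hc'm]

lemma boundGen {n : ℕ} (hn : 1 ≤ n) (B : Fin n → Fin n → WithBot ℝ)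
    (hcirc : ∀ ℓ c, IsCircuit B ℓ c → circuitWeight B ℓ c ≤ 0)
    (a : ℕ) (ha : 1 ≤ a) (j i : Fin n) :
    ∀ m, a ≤ m → tpow B m j i ≤ (Finset.Icc a (a + n - 1)).sup fun p => tpow B p j i := by
  intro m
  induction m using Nat.strong_induction_on with
  | _ m ih =>
    intro hm
    by_cases hle : m ≤ a + n - 1
    · exact Finset.le_sup (f := fun p => tpow B p j i) (Finset.mem_Icc.2 ⟨hm, hle⟩)
    · obtain ⟨m', h1, h2, h3⟩ := reduce hn B hcirc m (by omega) j i
      exact h3.trans (ih m' h2 (by omega))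

end TropAux

/-- Theorem 1 of the paper: the maximum average circuit weight `lam` of `G(A)`
is an eigenvalue of `A`, and every eigenvalue `μ` of `A` satisfies `μ ≤ lam`. -/
theorem stmt_4 {n : ℕ} (hn : 1 ≤ n) (A : Fin n → Fin n → WithBot ℝ)
    (lam : WithBot ℝ) (h : IsMaxCycleMean A lam) :
    IsEigenvalue A lam ∧ ∀ μ : WithBot ℝ, IsEigenvalue A μ → μ ≤ lam := by
  constructor
  · -- existence of an eigenvector for lam
    rcases h.2 with ⟨ℓ₀, c₀, hcirc₀, hweq⟩ | ⟨hlb, hnoc⟩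
    · -- there is a critical circuit; lam is a real number
      have hWne : circuitWeight A ℓ₀ c₀ ≠ ⊥ := by
        rw [circuitWeight]
        intro hb
        obtain ⟨k, hk, hkb⟩ := WithBot.sum_eq_bot_iff.1 hb
        exact hcirc₀.2.2 k (Finset.mem_range.1 hk) hkb
      have hlamb : lam ≠ ⊥ := by
        intro hb
        rw [hweq, hb, TropAux.nsmul_bot hcirc₀.1] at hWne
        exact hWne rfl
      obtain ⟨l, rfl⟩ := WithBot.ne_bot_iff_exists.1 hlamb
      set Bm : Fin n → Fin n → WithBot ℝ := fun i j => A i j + ↑(-l) with hBm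
      have hBA : ∀ i j, A i j = Bm i j + ↑l := by
        intro i j
        show A i j = A i j + ↑(-l) + ↑l
        rw [add_assoc, ← WithBot.coe_add, neg_add_cancel, WithBot.coe_zero, add_zero]
      have hBbot : ∀ i j : Fin n, Bm i j = ⊥ ↔ A i j = ⊥ := by
        intro i j
        show A i j + (↑(-l) : WithBot ℝ) = ⊥ ↔ _
        rw [WithBot.add_eq_bot]
        simp
      have hcwB : ∀ (ℓ : ℕ) (c : ℕ → Fin n),
          circuitWeight Bm ℓ c = circuitWeight A ℓ c + ↑(ℓ • (-l)) := by
        intro ℓ c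
        show (∑ k ∈ Finset.range ℓ, (A (c k) (c (k+1)) + ↑(-l))) = _
        rw [Finset.sum_add_distrib, Finset.sum_const, Finset.card_range, WithBot.coe_nsmul]
        rfl
      have hcircB : ∀ (ℓ : ℕ) (c : ℕ → Fin n), IsCircuit Bm ℓ c → circuitWeight Bm ℓ c ≤ 0 := by
        intro ℓ c hc
        have hcA : IsCircuit A ℓ c :=
          ⟨hc.1, hc.2.1, fun k hk hA => hc.2.2 k hk ((hBbot _ _).2 hA)⟩
        have h1 := h.1 ℓ c hcA
        rw [hcwB]
        calc circuitWeight A ℓ c + (↑(ℓ • (-l)) : WithBot ℝ)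
            ≤ ↑(ℓ • l) + ↑(ℓ • (-l)) := by
              refine add_le_add_left ?_ _
              rw [WithBot.coe_nsmul]
              exact h1
          _ = ↑(ℓ • l + ℓ • (-l)) := (WithBot.coe_add _ _).symm
          _ = 0 := by rw [smul_neg, add_neg_cancel, WithBot.coe_zero]
      have hcritB : circuitWeight Bm ℓ₀ c₀ = 0 := by
        rw [hcwB, hweq, show (ℓ₀ • ((l : WithBot ℝ))) = ↑(ℓ₀ • l) from (WithBot.coe_nsmul l ℓ₀).symm,
          ← WithBot.coe_add, smul_neg, add_neg_cancel, WithBot.coe_zero]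
      set i₀ := c₀ 0 with hi₀
      set x : Fin n → WithBot ℝ := fun j => (Finset.Icc 1 n).sup fun p => tpow Bm p j i₀ with hx
      have hge0 : (0 : WithBot ℝ) ≤ tpow Bm ℓ₀ i₀ i₀ := by
        have hwl := TropAux.walk_le Bm ℓ₀ c₀
        rw [hcritB, hcirc₀.2.1] at hwl
        exact hwl
      have hxi₀ : (0 : WithBot ℝ) ≤ x i₀ := by
        calc (0 : WithBot ℝ) ≤ tpow Bm ℓ₀ i₀ i₀ := hge0
          _ ≤ (Finset.Icc 1 (1 + n - 1)).sup fun p => tpow Bm p i₀ i₀ :=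
              TropAux.boundGen hn Bm hcircB 1 le_rfl i₀ i₀ ℓ₀ hcirc₀.1
          _ = x i₀ := by rw [show 1 + n - 1 = n by omega]
      have heig : ∀ j, tdot (Bm j) x = x j := by
        intro j
        have hstep1 : tdot (Bm j) x = (Finset.Icc 1 n).sup fun p => tpow Bm (p+1) j i₀ := by
          show (Finset.univ.sup fun k => Bm j k + (Finset.Icc 1 n).sup fun p => tpow Bm p k i₀) = _
          simp_rw [TropAux.add_sup]
          rw [Finset.sup_comm]
          refine Finset.sup_congr rfl fun p _ => ?_
          rw [TropAux.tpow_succ']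
          rfl
        rw [hstep1]
        apply le_antisymm
        · apply Finset.sup_le
          intro p hp
          obtain ⟨h1, h2⟩ := Finset.mem_Icc.1 hp
          calc tpow Bm (p+1) j i₀
              ≤ (Finset.Icc 1 (1+n-1)).sup fun r => tpow Bm r j i₀ :=
                TropAux.boundGen hn Bm hcircB 1 le_rfl j i₀ (p+1) (by omega)
            _ = x j := by rw [show 1 + n - 1 = n by omega]
        · apply Finset.sup_le
          intro p hp
          calc tpow Bm p j i₀ = tpow Bm p j i₀ + 0 := (add_zero _).symm
            _ ≤ tpow Bm p j i₀ + tpow Bm ℓ₀ i₀ i₀ := add_le_add_right hge0 _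
            _ ≤ tpow Bm (p + ℓ₀) j i₀ := TropAux.tpow_superadd Bm p ℓ₀ j i₀ i₀
            _ ≤ (Finset.Icc 2 (2+n-1)).sup fun r => tpow Bm r j i₀ :=
                TropAux.boundGen hn Bm hcircB 2 (by omega) j i₀ (p+ℓ₀)
                  (by have := (Finset.mem_Icc.1 hp).1; have := hcirc₀.1; omega)
            _ = (Finset.Icc 1 n).sup fun r => tpow Bm (r+1) j i₀ := by
                rw [show 2 + n - 1 = n + 1 by omega]
                exact TropAux.sup_shift n _
      refine ⟨x, ?_, ?_⟩
      · intro hbv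
        have hcf := congrFun hbv i₀
        rw [hcf] at hxi₀
        exact absurd (le_bot_iff.1 hxi₀) (by simp)
      · intro j
        have hAB : tdot (A j) x = ↑l + tdot (Bm j) x := by
          show (Finset.univ.sup fun k => A j k + x k)
              = ↑l + Finset.univ.sup fun k => Bm j k + x k
          rw [TropAux.add_sup]
          refine Finset.sup_congr rfl fun k _ => ?_
          rw [hBA j k, add_assoc, add_comm ((l : WithBot ℝ)), ← add_assoc]
          rw [add_comm (Bm j k + x k)]
        rw [hAB, heig j]
    · -- no circuits: lam = ⊥, pick a source vertex
      subst hlb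
      have hsource : ∃ i : Fin n, ∀ j, A j i = ⊥ := by
        by_contra hs
        push_neg at hs
        let ds : ℕ → Fin n := fun k => Nat.rec ⟨0, hn⟩ (fun _ p => (hs p).choose) k
        have hds : ∀ k, A (ds (k+1)) (ds k) ≠ ⊥ := fun k => (hs (ds k)).choose_spec
        obtain ⟨p, q, hpq, hqn, hdpq⟩ := TropAux.exists_repeat hn ds
        refine hnoc (q - p) (fun k => ds (q - k)) ⟨by omega, ?_, ?_⟩
        · show ds (q - (q - p)) = ds (q - 0)
          rw [show q - (q - p) = p by omega, Nat.sub_zero]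
          exact hdpq
        · intro k hk
          show A (ds (q - k)) (ds (q - (k+1))) ≠ ⊥
          rw [show q - k = (q - (k+1)) + 1 by omega]
          exact hds (q - (k+1))
      obtain ⟨i, hsi⟩ := hsource
      refine ⟨fun j => if j = i then (0 : WithBot ℝ) else ⊥, ?_, ?_⟩
      · intro hbv
        have hcf := congrFun hbv i
        simp [botVec] at hcf
      · intro j
        rw [WithBot.bot_add]
        apply le_bot_iff.1
        apply Finset.sup_le
        intro k _
        by_cases hk : k = i
        · subst hk
          rw [hsi j, WithBot.bot_add]
        · simp [hk]
  · -- every eigenvalue is at most lam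
    intro μ hμ
    obtain ⟨x, hxne, hev⟩ := hμ
    have hex : ∃ i, x i ≠ ⊥ := by
      by_contra hcon
      push_neg at hcon
      exact hxne (funext fun i => hcon i)
    obtain ⟨i₀, hi₀⟩ := hex
    rcases eq_or_ne μ ⊥ with rfl | hμb
    · exact bot_le
    obtain ⟨mr, rfl⟩ := WithBot.ne_bot_iff_exists.1 hμb
    have step : ∀ i : Fin n, x i ≠ ⊥ → ∃ j : Fin n, x j ≠ ⊥ ∧ A i j + x j = ↑mr + x i := by
      intro i hi
      obtain ⟨j, -, hj⟩ := Finset.exists_mem_eq_sup Finset.univ ⟨i, Finset.mem_univ i⟩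
        (fun j => A i j + x j)
      have hji : A i j + x j = ↑mr + x i := by rw [← hj]; exact hev i
      refine ⟨j, ?_, hji⟩
      intro hb
      rw [hb, WithBot.add_bot] at hji
      rcases WithBot.add_eq_bot.1 hji.symm with hc | hc
      · exact WithBot.coe_ne_bot hc
      · exact hi hc
    let cs : ℕ → {i : Fin n // x i ≠ ⊥} := fun k =>
      Nat.rec ⟨i₀, hi₀⟩ (fun _ p => ⟨(step p.1 p.2).choose, ((step p.1 p.2).choose_spec).1⟩) k
    have hcs : ∀ k, A (cs k).1 (cs (k+1)).1 + x (cs (k+1)).1 = ↑mr + x (cs k).1 := by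
      intro k
      exact ((step (cs k).1 (cs k).2).choose_spec).2
    set cv : ℕ → Fin n := fun k => (cs k).1 with hcv
    obtain ⟨p, q, hpq, hqn, hcpq⟩ := TropAux.exists_repeat hn cv
    set ℓ := q - p with hℓ
    have hℓ1 : 1 ≤ ℓ := by omega
    set cc : ℕ → Fin n := fun k => cv (p + k) with hcc
    have hedge : ∀ k, A (cc k) (cc (k+1)) + x (cc (k+1)) = ↑mr + x (cc k) := by
      intro k
      exact hcs (p + k)
    have hcircC : IsCircuit A ℓ cc := by
      refine ⟨hℓ1, ?_, ?_⟩
      · show cv (p + ℓ) = cv (p + 0)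
        rw [show p + ℓ = q by omega, Nat.add_zero]
        exact hcpq.symm
      · intro k hk
        intro hb
        have hek := hedge k
        rw [hb, WithBot.bot_add] at hek
        rcases WithBot.add_eq_bot.1 hek.symm with hc | hc
        · exact WithBot.coe_ne_bot hc
        · exact (cs (p + k)).2 hc
    have hsum : circuitWeight A ℓ cc + (∑ k ∈ Finset.range ℓ, x (cc (k+1)))
        = ℓ • ((mr : WithBot ℝ)) + ∑ k ∈ Finset.range ℓ, x (cc k) := by
      rw [circuitWeight, ← Finset.sum_add_distrib]
      have : (∑ k ∈ Finset.range ℓ, (A (cc k) (cc (k+1)) + x (cc (k+1))))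
          = ∑ k ∈ Finset.range ℓ, (↑mr + x (cc k)) :=
        Finset.sum_congr rfl fun k _ => hedge k
      rw [this, Finset.sum_add_distrib, Finset.sum_const, Finset.card_range]
    have hshift : (∑ k ∈ Finset.range ℓ, x (cc (k+1))) = ∑ k ∈ Finset.range ℓ, x (cc k) := by
      have h1 : (∑ k ∈ Finset.range (ℓ+1), x (cc k))
          = (∑ k ∈ Finset.range ℓ, x (cc (k+1))) + x (cc 0) := Finset.sum_range_succ' _ ℓ
      have h2 : (∑ k ∈ Finset.range (ℓ+1), x (cc k))
          = (∑ k ∈ Finset.range ℓ, x (cc k)) + x (cc ℓ) := Finset.sum_range_succ _ ℓ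
      have h3 : cc ℓ = cc 0 := hcircC.2.1
      rw [h3] at h2
      have h4 : x (cc 0) ≠ ⊥ := (cs (p + 0)).2
      exact WithBot.add_right_cancel h4 (h1.symm.trans h2)
    rw [hshift] at hsum
    have hS0 : (∑ k ∈ Finset.range ℓ, x (cc k)) ≠ ⊥ := by
      intro hb
      obtain ⟨k, -, hkb⟩ := WithBot.sum_eq_bot_iff.1 hb
      exact (cs (p + k)).2 hkb
    have hW : circuitWeight A ℓ cc = ℓ • ((mr : WithBot ℝ)) :=
      WithBot.add_right_cancel hS0 hsum
    have hle := h.1 ℓ cc hcircC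
    rw [hW] at hle
    have hlamb : lam ≠ ⊥ := by
      intro hb
      rw [hb, TropAux.nsmul_bot hℓ1, le_bot_iff, ← WithBot.coe_nsmul] at hle
      exact WithBot.coe_ne_bot hle
    obtain ⟨lr, rfl⟩ := WithBot.ne_bot_iff_exists.1 hlamb
    rw [← WithBot.coe_nsmul, ← WithBot.coe_nsmul, WithBot.coe_le_coe] at hle
    rw [WithBot.coe_le_coe]
    have hℓpos : (0 : ℝ) < (ℓ : ℝ) := by positivity
    rw [nsmul_eq_mul, nsmul_eq_mul] at hle
    exact (mul_le_mul_iff_right₀ hℓpos).1 hle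
end
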